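/- If (X, ω_X) is a weighted fan of dimension k in V and (Y, ω_Y) is a refinement of (X, ω_X), then (X, ω_X) is a tropical fan (satisfies the balancing condition) if and only if (Y, ω_Y) is a tropical fan. -/

import Mathlib

open scoped BigOperators Pointwise Classical

namespace TropInt

/-! ### Basic integral-linear algebra helpers -/

/-- The real vector associated to an integral (lattice) vector. -/
def toReal {N : ℕ} (v : Fin N → ℤ) : Fin N → ℝ := fun i => (v i : ℝ)

/-- Evaluation of an integral linear form on a point of `ℝ^N`. -/
def evalForm {N : ℕ} (l : Fin N → ℤ) (x : Fin N → ℝ) : ℝ := ∑ i, (l i : ℝ) * x i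

/-- Evaluation of an integral linear form on a lattice vector. -/
def pairZ {N : ℕ} (l v : Fin N → ℤ) : ℤ := ∑ i, l i * v i

/-- A rational polyhedron in `ℝ^N`: a set cut out by finitely many integral affine
inequalities. -/
def IsRationalPolyhedron {N : ℕ} (σ : Set (Fin N → ℝ)) : Prop :=
  ∃ S : Finset ((Fin N → ℤ) × ℤ), σ = {x | ∀ p ∈ S, evalForm p.1 x ≤ (p.2 : ℝ)}

/-- A rational cone in `ℝ^N`: a set cut out by finitely many integral linear equalities
and inequalities. -/
def IsRationalCone {N : ℕ} (σ : Set (Fin N → ℝ)) : Prop :=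
  ∃ E I : Finset (Fin N → ℤ),
    σ = {x | (∀ l ∈ E, evalForm l x = 0) ∧ ∀ l ∈ I, 0 ≤ evalForm l x}

/-- The dimension of a polyhedron (resp. cone) `σ`, i.e. the dimension of the smallest
affine subspace `V_σ` containing it. -/
noncomputable def polyDim {N : ℕ} (σ : Set (Fin N → ℝ)) : ℕ :=
  Module.finrank ℝ (vectorSpan ℝ σ)

/-! ### Weighted rational polyhedral complexes (in particular: weighted fans) in `ℝ^N` -/

/-- A weighted rational polyhedral complex of dimension `dim` in `ℝ^N`:
a finite collection of rational polyhedra, closed under (nonempty) intersections, such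
that every polyhedron is the disjoint union of the relative interiors of its faces in
the complex, pure-dimensional, together with an integral weight function supported on
the facets (the `dim`-dimensional polyhedra).
If all polyhedra are cones (see `WComplex.IsFan`) this is precisely a weighted fan. -/
structure WComplex (N : ℕ) where
  dim : ℕ
  polys : Set (Set (Fin N → ℝ))
  finite : polys.Finite
  nonempty_mem : ∀ σ ∈ polys, σ.Nonempty
  rational : ∀ σ ∈ polys, IsRationalPolyhedron σ
  inter_mem : ∀ σ ∈ polys, ∀ τ ∈ polys, (σ ∩ τ).Nonempty → σ ∩ τ ∈ polys
  decomp : ∀ σ ∈ polys, ∀ x ∈ σ, ∃! τ, τ ∈ polys ∧ τ ⊆ σ ∧ x ∈ intrinsicInterior ℝ τ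
  pure : ∀ σ ∈ polys, polyDim σ ≤ dim ∧ ∃ τ ∈ polys, σ ⊆ τ ∧ polyDim τ = dim
  weight : Set (Fin N → ℝ) → ℤ
  weight_zero : ∀ σ, ¬(σ ∈ polys ∧ polyDim σ = dim) → weight σ = 0

namespace WComplex

variable {N : ℕ}

/-- The support `|X|` of a complex. -/
def support (X : WComplex N) : Set (Fin N → ℝ) := ⋃₀ X.polys

noncomputable def polysFinset (X : WComplex N) : Finset (Set (Fin N → ℝ)) :=
  X.finite.toFinset

/-- The facets (maximal-dimensional polyhedra) of `X`. -/
def facets (X : WComplex N) : Set (Set (Fin N → ℝ)) :=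
  {σ | σ ∈ X.polys ∧ polyDim σ = X.dim}

/-- The facets of `X` having `τ` as a proper face. -/
noncomputable def facetsAbove (X : WComplex N) (τ : Set (Fin N → ℝ)) :
    Finset (Set (Fin N → ℝ)) :=
  X.polysFinset.filter fun σ => polyDim σ = X.dim ∧ τ ⊆ σ ∧ τ ≠ σ

/-- `X` is a (weighted) fan if all of its polyhedra are rational cones. -/
def IsFan (X : WComplex N) : Prop := ∀ σ ∈ X.polys, IsRationalCone σ

end WComplex

/-- `v` is a representative in the lattice `ℤ^N` of the primitive normal vector
`u_{σ/τ}` of `σ` relative to its codimension-one face `τ`: it lies in `Λ_σ`, it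
generates `Λ_σ/Λ_τ`, and it points from `τ` towards `σ`. -/
def IsPrimitiveNormal {N : ℕ} (τ σ : Set (Fin N → ℝ)) (v : Fin N → ℤ) : Prop :=
  toReal v ∈ vectorSpan ℝ σ ∧
  (∀ w : Fin N → ℤ, toReal w ∈ vectorSpan ℝ σ →
    ∃ (a : ℤ) (u : Fin N → ℤ), toReal u ∈ vectorSpan ℝ τ ∧ w = a • v + u) ∧
  ∃ (l : Fin N → ℤ) (c : ℝ),
    (∀ x ∈ τ, evalForm l x = c) ∧ (∀ x ∈ σ, c ≤ evalForm l x) ∧ 0 < pairZ l v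

namespace WComplex

variable {N : ℕ}

/-- The balancing condition: around every codimension-one polyhedron `τ` the weighted
sum of (representatives of the) primitive normal vectors of the adjacent facets lies
in `V_τ`.  A weighted fan satisfying this condition is a tropical fan. -/
def IsTropical (X : WComplex N) : Prop :=
  ∀ τ ∈ X.polys, polyDim τ + 1 = X.dim →
    ∃ v : Set (Fin N → ℝ) → (Fin N → ℤ),
      (∀ σ ∈ X.facetsAbove τ, IsPrimitiveNormal τ σ (v σ)) ∧
      toReal (∑ σ ∈ X.facetsAbove τ, X.weight σ • v σ) ∈ vectorSpan ℝ τ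

/-- The polyhedra of the non-zero part `X*` of `X`. -/
def starPolys (X : WComplex N) : Set (Set (Fin N → ℝ)) :=
  {τ | τ ∈ X.polys ∧ ∃ σ ∈ X.polys, polyDim σ = X.dim ∧ X.weight σ ≠ 0 ∧ τ ⊆ σ}

/-- The support `|X*|` of the non-zero part of `X`. -/
def starSupport (X : WComplex N) : Set (Fin N → ℝ) := ⋃₀ X.starPolys

end WComplex

/-- `Y` is a refinement of `X`: the non-zero part of `Y` is a subcomplex (subfan) of the
non-zero part of `X` with the same support, and each facet of `Y*` inherits the weight of
the (inclusion-)minimal polyhedron of `X*` containing it. -/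
def Refines {N : ℕ} (Y X : WComplex N) : Prop :=
  (∀ σ ∈ Y.starPolys, ∃ τ ∈ X.starPolys, σ ⊆ τ) ∧
  Y.starSupport = X.starSupport ∧
  ∀ σ ∈ Y.starPolys, polyDim σ = Y.dim →
    ∀ τ, (τ ∈ X.starPolys ∧ σ ⊆ τ ∧ ∀ τ' ∈ X.starPolys, σ ⊆ τ' → τ ⊆ τ') →
      Y.weight σ = X.weight τ

/-- Two weighted complexes are equivalent if they have a common refinement. -/
def PEquiv {N : ℕ} (X Y : WComplex N) : Prop := ∃ Z, Refines Z X ∧ Refines Z Y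

/-- Two weighted fans are equivalent if they have a common refinement (by a weighted fan). -/
def FanEquiv {N : ℕ} (X Y : WComplex N) : Prop :=
  ∃ Z, Z.IsFan ∧ Refines Z X ∧ Refines Z Y

/-- `S` represents the sum `X + Y`: after refining `X` and `Y` suitably (so that the
union of the two collections of polyhedra is again a complex), `S` is the union with
added weights. -/
def SumRepr {N : ℕ} (X Y S : WComplex N) : Prop :=
  ∃ X' Y' : WComplex N, Refines X' X ∧ Refines Y' Y ∧
    S.dim = X.dim ∧ S.polys = X'.polys ∪ Y'.polys ∧
    ∀ σ, S.weight σ = X'.weight σ + Y'.weight σ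

/-- The empty weighted complex, considered as having dimension `k`. -/
def emptyW (N k : ℕ) : WComplex N where
  dim := k
  polys := ∅
  finite := Set.finite_empty
  nonempty_mem := by intro σ hσ; exact absurd hσ (Set.notMem_empty σ)
  rational := by intro σ hσ; exact absurd hσ (Set.notMem_empty σ)
  inter_mem := by intro σ hσ; exact absurd hσ (Set.notMem_empty σ)
  decomp := by intro σ hσ; exact absurd hσ (Set.notMem_empty σ)
  pure := by intro σ hσ; exact absurd hσ (Set.notMem_empty σ)
  weight := fun _ => 0
  weight_zero := fun _ _ => rfl

/-- The weighted complex obtained from `X` by negating all weights. -/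
def WComplex.negW {N : ℕ} (X : WComplex N) : WComplex N where
  dim := X.dim
  polys := X.polys
  finite := X.finite
  nonempty_mem := X.nonempty_mem
  rational := X.rational
  inter_mem := X.inter_mem
  decomp := X.decomp
  pure := X.pure
  weight := fun σ => - X.weight σ
  weight_zero := fun σ h => by show -X.weight σ = 0; rw [X.weight_zero σ h]; ring

/-! ### Rational functions and associated Weil divisors -/

/-- `φ` is a (non-zero) rational function adapted to the complex `X`: it is continuous
on `|X|` and restricts to an integral affine-linear function on every polyhedron of `X`. -/
def AffineOnPolys {N : ℕ} (X : WComplex N) (φ : (Fin N → ℝ) → ℝ) : Prop :=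
  ContinuousOn φ X.support ∧
  ∀ σ ∈ X.polys, ∃ (l : Fin N → ℤ) (c : ℝ), ∀ x ∈ σ, φ x = evalForm l x + c

/-- The weight `ω_φ(τ)` of the codimension-one polyhedron `τ` in the Weil divisor of `φ`
equals `w`:  `w = ∑_{σ>τ} φ_σ(ω(σ)·v_{σ/τ}) − φ_τ(∑_{σ>τ} ω(σ)·v_{σ/τ})` for (any)
choices of representatives `v_{σ/τ}` of the primitive normal vectors and of the integral
linear parts `φ_σ`, `φ_τ` of `φ` on the polyhedra. -/
def WeilWeightEq {N : ℕ} (X : WComplex N) (φ : (Fin N → ℝ) → ℝ)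
    (τ : Set (Fin N → ℝ)) (w : ℤ) : Prop :=
  ∃ (v l : Set (Fin N → ℝ) → (Fin N → ℤ)) (lτ : Fin N → ℤ),
    (∀ σ ∈ X.facetsAbove τ, IsPrimitiveNormal τ σ (v σ) ∧
      ∃ c : ℝ, ∀ x ∈ σ, φ x = evalForm (l σ) x + c) ∧
    (∃ c : ℝ, ∀ x ∈ τ, φ x = evalForm lτ x + c) ∧
    w = (∑ σ ∈ X.facetsAbove τ, X.weight σ * pairZ (l σ) (v σ))
        - pairZ lτ (∑ σ ∈ X.facetsAbove τ, X.weight σ • v σ)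

/-- `F` represents the associated Weil divisor `div(φ) = φ·X`: for some representative
`X'` of the class of `X` on whose polyhedra `φ` is integral affine linear, `F` is the
codimension-one skeleton of `X'` equipped with the weights `ω_φ`. -/
def WeilRepr {N : ℕ} (X : WComplex N) (φ : (Fin N → ℝ) → ℝ) (F : WComplex N) : Prop :=
  F.dim + 1 = X.dim ∧
  ∃ X', Refines X' X ∧ X'.dim = X.dim ∧ AffineOnPolys X' φ ∧
    F.polys = {σ | σ ∈ X'.polys ∧ polyDim σ ≤ F.dim} ∧
    ∀ τ ∈ F.polys, polyDim τ = F.dim → WeilWeightEq X' φ τ (F.weight τ)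

/-- `U` is (relatively) open in `S`. -/
def RelOpenIn {γ : Type*} [TopologicalSpace γ] (S U : Set γ) : Prop :=
  ∃ O : Set γ, IsOpen O ∧ U ∩ S = O ∩ S


/-- The lattice `Λ_σ` of integral vectors in the linear space `V_σ` spanned by
(differences of points of) `σ`. -/
def dirLattice {M : ℕ} (σ : Set (Fin M → ℝ)) : AddSubgroup (Fin M → ℤ) where
  carrier := {v | toReal v ∈ vectorSpan ℝ σ}
  zero_mem' := by
    have h : toReal (0 : Fin M → ℤ) = 0 := by funext i; simp [toReal]
    simp only [Set.mem_setOf_eq, h]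
    exact Submodule.zero_mem _
  add_mem' := by
    intro a b ha hb
    have h : toReal (a + b) = toReal a + toReal b := by
      funext i; simp [toReal]
    simp only [Set.mem_setOf_eq, h]
    exact Submodule.add_mem _ ha hb
  neg_mem' := by
    intro a ha
    have h : toReal (-a) = -toReal a := by funext i; simp [toReal]
    simp only [Set.mem_setOf_eq, h]
    exact Submodule.neg_mem _ ha

/-!
Balancing at a codimension-one cone of one fan is compared with balancing at a cone of the other,
through a point `x₀` of its relative interior chosen off all lower-dimensional cones of the other
fan: the cone of the other fan carrying `x₀` in its relative interior then has dimension `k - 1`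
or `k`.

For codimension-one cones `τ` of `Y*` and `ρ` of `X` sharing such a point `x₀`, a form cutting `ρ`
out of a facet of `X*` containing `τ` vanishes on `τ`, so `V_τ = V_ρ`. Sending a facet of `Y*`
above `τ` to the smallest cone of `X*` containing it is a weight-preserving bijection onto the
facets of `X*` above `ρ`, and corresponding primitive normal vectors agree modulo `V_τ`; hence so
do the two balancing sums.

If instead `x₀` lies in the relative interior of a facet `ρ` of `X` (possible only for `τ` in `Y`),
the facets of `Y*` above `τ` are the two halves into which `τ` cuts `ρ`: they carry the weight of
`ρ` and opposite primitive normal vectors, so `Y` is balanced at `τ`.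
-/

end TropInt

open Filter Topology

section IntrinsicInterior

variable {E : Type*} [NormedAddCommGroup E] [NormedSpace ℝ E] {s t : Set E} {x y u : E}

theorem mem_intrinsicInterior_iff_eventually :
    x ∈ intrinsicInterior ℝ s ↔ x ∈ s ∧ ∀ᶠ u in 𝓝 (0 : E), u ∈ vectorSpan ℝ s → x + u ∈ s := by
  constructor
  · rintro ⟨y, hy, rfl⟩
    refine ⟨interior_subset (s := Subtype.val ⁻¹' s) hy, ?_⟩
    obtain ⟨ε, hε, hball⟩ := Metric.mem_nhds_iff.1 (mem_interior_iff_mem_nhds.1 hy)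
    refine Metric.eventually_nhds_iff.2 ⟨ε, hε, fun u hu hV => ?_⟩
    have hmem : u +ᵥ (y : E) ∈ affineSpan ℝ s :=
      AffineSubspace.vadd_mem_of_mem_direction (by rwa [direction_affineSpan]) y.2
    have := @hball ⟨_, hmem⟩ (by simpa [Subtype.dist_eq, dist_eq_norm] using hu)
    simpa [add_comm] using this
  · rintro ⟨hx, h⟩
    obtain ⟨ε, hε, hball⟩ := Metric.eventually_nhds_iff.1 h
    refine ⟨⟨x, subset_affineSpan ℝ s hx⟩, mem_interior_iff_mem_nhds.2
      (Metric.mem_nhds_iff.2 ⟨ε, hε, fun y hy => ?_⟩), rfl⟩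
    have hV : (y : E) - x ∈ vectorSpan ℝ s := by
      rw [← direction_affineSpan]
      exact AffineSubspace.vsub_mem_direction y.2 (subset_affineSpan ℝ s hx)
    have := hball (by simpa [Subtype.dist_eq, dist_eq_norm] using hy) hV
    simpa using this

lemma exists_pos_smul_of_eventually {p : E → Prop} (h : ∀ᶠ u in 𝓝 (0 : E), p u) (v : E) :
    ∃ t : ℝ, 0 < t ∧ p (t • v) := by
  have hv : Tendsto (fun t : ℝ => t • v) (𝓝[>] 0) (𝓝 0) :=
    ((continuous_id.smul continuous_const).tendsto' 0 0 (zero_smul ℝ v)).mono_left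
      nhdsWithin_le_nhds
  exact ((hv.eventually h).and self_mem_nhdsWithin).exists.imp fun t ht => ⟨ht.2, ht.1⟩

lemma exists_pos_add_smul_mem (hx : x ∈ intrinsicInterior ℝ s) (hu : u ∈ vectorSpan ℝ s) :
    ∃ t : ℝ, 0 < t ∧ x + t • u ∈ s :=
  (exists_pos_smul_of_eventually (mem_intrinsicInterior_iff_eventually.1 hx).2 u).imp
    fun t ht => ⟨ht.1, ht.2 (Submodule.smul_mem _ t hu)⟩

lemma eventually_add_mem_intrinsicInterior (hx : x ∈ intrinsicInterior ℝ s) :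
    ∀ᶠ u in 𝓝 (0 : E), u ∈ vectorSpan ℝ s → x + u ∈ intrinsicInterior ℝ s := by
  have h := (mem_intrinsicInterior_iff_eventually.1 hx).2
  filter_upwards [h, h.eventually_nhds] with u hu hu' hV
  refine mem_intrinsicInterior_iff_eventually.2 ⟨hu hV, ?_⟩
  have hshift : Tendsto (u + ·) (𝓝 (0 : E)) (𝓝 u) := by
    simpa using (continuous_const_add u).tendsto 0
  filter_upwards [hshift.eventually hu'] with w hw hwV
  simpa [add_assoc] using hw (Submodule.add_mem _ hV hwV)

lemma Convex.add_smul_sub_mem_intrinsicInterior (hs : Convex ℝ s) (hx : x ∈ s)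
    (hy : y ∈ intrinsicInterior ℝ s) {t : ℝ} (ht : t ∈ Set.Ioc (0 : ℝ) 1) :
    x + t • (y - x) ∈ intrinsicInterior ℝ s := by
  obtain ⟨hys, h⟩ := mem_intrinsicInterior_iff_eventually.1 hy
  refine mem_intrinsicInterior_iff_eventually.2
    ⟨hs.add_smul_sub_mem hx hys (Set.Ioc_subset_Icc_self ht), ?_⟩
  have hscale : Tendsto (t⁻¹ • · : E → E) (𝓝 0) (𝓝 0) := by
    simpa using (continuous_const_smul t⁻¹).tendsto (0 : E)
  filter_upwards [hscale.eventually h] with w hw hwV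
  have hmem := hs.add_smul_sub_mem hx (hw (Submodule.smul_mem _ _ hwV)) (Set.Ioc_subset_Icc_self ht)
  convert hmem using 1
  simp only [smul_sub, smul_add, smul_smul, mul_inv_cancel₀ ht.1.ne', one_smul]
  abel

lemma intrinsicInterior_subset_of_vectorSpan_eq (hst : s ⊆ t)
    (hV : vectorSpan ℝ s = vectorSpan ℝ t) : intrinsicInterior ℝ s ⊆ intrinsicInterior ℝ t := by
  intro x hx
  obtain ⟨hxs, h⟩ := mem_intrinsicInterior_iff_eventually.1 hx
  exact mem_intrinsicInterior_iff_eventually.2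
    ⟨hst hxs, h.mono fun u hu hV' => hst (hu (hV ▸ hV'))⟩

lemma eq_zero_of_nonneg_of_mem_intrinsicInterior {f : E →ₗ[ℝ] ℝ} (hf : ∀ y ∈ s, 0 ≤ f y)
    (hx : x ∈ intrinsicInterior ℝ s) (hfx : f x = 0) (hy : y ∈ s) : f y = 0 := by
  obtain ⟨t, ht, hmem⟩ := exists_pos_add_smul_mem hx
    (vsub_mem_vectorSpan ℝ (intrinsicInterior_subset hx) hy)
  have := hf _ hmem
  simp only [vsub_eq_sub, map_add, map_smul, map_sub, hfx, smul_eq_mul] at this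
  nlinarith [hf y hy]

lemma vectorSpan_le_ker_of_eqOn {f : E →ₗ[ℝ] ℝ} {c : ℝ} (hf : ∀ y ∈ s, f y = c) :
    vectorSpan ℝ s ≤ LinearMap.ker f := by
  rw [vectorSpan_def, Submodule.span_le]
  rintro _ ⟨a, ha, b, hb, rfl⟩
  simp [hf a ha, hf b hb]

lemma mem_vectorSpan_of_zero_mem (h0 : (0 : E) ∈ s) (hy : y ∈ s) : y ∈ vectorSpan ℝ s := by
  simpa using vsub_mem_vectorSpan ℝ hy h0

end IntrinsicInterior

section GenericPoint

variable {E : Type*} [NormedAddCommGroup E] [NormedSpace ℝ E] [FiniteDimensional ℝ E]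

/-- Along a line through a relative interior point in a direction outside all the lower
dimensional spans, each of the finitely many sets is met at most once. -/
theorem exists_mem_intrinsicInterior_forall_finrank_le {s : Set E} (hs : Convex ℝ s)
    (hne : s.Nonempty) {S : Set (Set E)} (hS : S.Finite) :
    ∃ x ∈ intrinsicInterior ℝ s, ∀ C ∈ S, x ∈ C →
      Module.finrank ℝ (vectorSpan ℝ s) ≤ Module.finrank ℝ (vectorSpan ℝ C) := by
  classical
  obtain ⟨x₁, hx₁⟩ := hne.intrinsicInterior hs
  set bad := {C ∈ S | Module.finrank ℝ (vectorSpan ℝ C) < Module.finrank ℝ (vectorSpan ℝ s)}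
  have hbad : bad.Finite := hS.subset fun C hC => hC.1
  have htop : ⊤ ∉ hbad.toFinset.image
      fun C => (vectorSpan ℝ C).comap (vectorSpan ℝ s).subtype := by
    simp only [Finset.mem_image, Set.Finite.mem_toFinset, Submodule.comap_subtype_eq_top,
      not_exists, not_and]
    exact fun C hC hle => (Submodule.finrank_mono hle).not_gt hC.2
  obtain ⟨d, hd⟩ :=
    (Set.ne_univ_iff_exists_notMem _).1 (Subspace.biUnion_ne_univ_of_top_notMem htop)
  have hdC : ∀ C ∈ bad, (d : E) ∉ vectorSpan ℝ C := fun C hC hdC =>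
    hd (Set.mem_biUnion (Finset.mem_image_of_mem _ (hbad.mem_toFinset.2 hC)) hdC)
  have hT : {t : ℝ | ∃ C ∈ bad, x₁ + t • (d : E) ∈ C}.Finite := by
    refine (hbad.biUnion fun C hC => (?_ : {t : ℝ | x₁ + t • (d : E) ∈ C}.Finite)).subset
      fun t ⟨C, hC, ht⟩ => Set.mem_biUnion hC ht
    refine Set.Subsingleton.finite fun t₁ (h₁ : x₁ + t₁ • (d : E) ∈ C) t₂
      (h₂ : x₁ + t₂ • (d : E) ∈ C) => by_contra fun hne => hdC C hC ?_
    have := Submodule.smul_mem _ (t₁ - t₂)⁻¹ (vsub_mem_vectorSpan ℝ h₁ h₂)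
    rwa [vsub_eq_sub, add_sub_add_left_eq_sub, ← sub_smul, smul_smul,
      inv_mul_cancel₀ (sub_ne_zero.2 hne), one_smul] at this
  have hline : Tendsto (fun t : ℝ => t • (d : E)) (𝓝 0) (𝓝 0) :=
    (continuous_id.smul continuous_const).tendsto' 0 0 (zero_smul ℝ _)
  have hgood := hline.eventually (eventually_add_mem_intrinsicInterior hx₁)
  obtain ⟨t, ht, htT⟩ := ((infinite_of_mem_nhds (0 : ℝ) hgood).sdiff hT).nonempty
  refine ⟨x₁ + t • d, ht (Submodule.smul_mem _ t d.2), fun C hC hxC => ?_⟩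
  by_contra hlt
  exact htT ⟨C, ⟨hC, not_le.1 hlt⟩, hxC⟩

end GenericPoint

lemma exists_mem_of_tendsto_of_finite_closed {X : Type*} [TopologicalSpace X] {S : Set (Set X)}
    (hS : S.Finite) (hcl : ∀ C ∈ S, IsClosed C) {x : ℕ → X} {a : X}
    (hx : ∀ n, ∃ C ∈ S, x n ∈ C) (hlim : Tendsto x atTop (𝓝 a)) :
    ∃ C ∈ S, a ∈ C ∧ ∃ n, x n ∈ C := by
  have hfreq : ∃ᶠ n in atTop, ∃ C ∈ S, x n ∈ C := Frequently.of_forall hx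
  obtain ⟨C, hC, hfreqC⟩ := hS.frequently_exists.1 hfreq
  exact ⟨C, hC, (hcl C hC).mem_of_frequently_of_tendsto hfreqC hlim, hfreqC.exists⟩

section LinearAlgebra

variable {E : Type*} [AddCommGroup E] [Module ℝ E] {W V : Submodule ℝ E} {f : E →ₗ[ℝ] ℝ}

lemma inf_ker_eq_of_finrank_add_one [FiniteDimensional ℝ E] (hWV : W ≤ V)
    (hd : Module.finrank ℝ W + 1 = Module.finrank ℝ V) (hfW : W ≤ LinearMap.ker f) {v : E}
    (hv : v ∈ V) (hfv : f v ≠ 0) : LinearMap.ker f ⊓ V = W := by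
  refine (Submodule.eq_of_le_of_finrank_le (le_inf hfW hWV) ?_).symm
  have := Submodule.finrank_lt_finrank_of_lt
    (inf_lt_right.2 fun h => hfv (LinearMap.mem_ker.1 (h hv)))
  omega

lemma sub_div_smul_mem_of_inf_ker_eq (h : LinearMap.ker f ⊓ V = W) {p q : E} (hp : p ∈ V)
    (hq : q ∈ V) (hfq : f q ≠ 0) : p - (f p / f q) • q ∈ W := by
  rw [← h]
  exact ⟨by simp [div_mul_cancel₀ _ hfq], V.sub_mem hp (V.smul_mem _ hq)⟩

end LinearAlgebra

namespace TropInt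

section IntegralForms

variable {N : ℕ}

noncomputable def evalFormL (l : Fin N → ℤ) : (Fin N → ℝ) →ₗ[ℝ] ℝ where
  toFun := evalForm l
  map_add' := dotProduct_add (toReal l)
  map_smul' c x := dotProduct_smul c (toReal l) x

@[simp] lemma evalFormL_apply (l : Fin N → ℤ) (x : Fin N → ℝ) : evalFormL l x = evalForm l x :=
  rfl

@[simp] lemma evalForm_add (l : Fin N → ℤ) (x y : Fin N → ℝ) :
    evalForm l (x + y) = evalForm l x + evalForm l y :=
  (evalFormL l).map_add x y

@[simp] lemma evalForm_smul (l : Fin N → ℤ) (c : ℝ) (x : Fin N → ℝ) :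
    evalForm l (c • x) = c * evalForm l x :=
  (evalFormL l).map_smul c x

@[simp] lemma evalForm_zero (l : Fin N → ℤ) : evalForm l 0 = 0 := (evalFormL l).map_zero

lemma evalForm_toReal (l v : Fin N → ℤ) : evalForm l (toReal v) = pairZ l v := by
  simp [evalForm, pairZ, toReal]

@[simp] lemma toReal_zero : toReal (0 : Fin N → ℤ) = 0 := by ext; simp [toReal]

@[simp] lemma toReal_add (a b : Fin N → ℤ) : toReal (a + b) = toReal a + toReal b := by
  ext; simp [toReal]

@[simp] lemma toReal_neg (a : Fin N → ℤ) : toReal (-a) = -toReal a := by ext; simp [toReal]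

@[simp] lemma toReal_sub (a b : Fin N → ℤ) : toReal (a - b) = toReal a - toReal b := by
  ext; simp [toReal]

@[simp] lemma toReal_zsmul (n : ℤ) (a : Fin N → ℤ) : toReal (n • a) = (n : ℝ) • toReal a := by
  ext; simp [toReal]

lemma toReal_sum {α : Type*} (s : Finset α) (f : α → Fin N → ℤ) :
    toReal (∑ a ∈ s, f a) = ∑ a ∈ s, toReal (f a) := by
  ext; simp [toReal]

def pairHom (l : Fin N → ℤ) : (Fin N → ℤ) →+ ℤ := AddMonoidHom.mk' (pairZ l) (dotProduct_add l)

@[simp] lemma pairHom_apply (l v : Fin N → ℤ) : pairHom l v = pairZ l v := rfl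

end IntegralForms

section RationalCones

variable {N : ℕ}

lemma IsRationalPolyhedron.convex {σ : Set (Fin N → ℝ)} (h : IsRationalPolyhedron σ) :
    Convex ℝ σ := by
  obtain ⟨S, rfl⟩ := h
  simp only [Set.ofPred_forall]
  exact convex_iInter₂ fun p _ => convex_halfSpace_le (evalFormL p.1).isLinear _

lemma IsRationalPolyhedron.isClosed {σ : Set (Fin N → ℝ)} (h : IsRationalPolyhedron σ) :
    IsClosed σ := by
  obtain ⟨S, rfl⟩ := h
  simp only [Set.ofPred_forall]
  exact isClosed_biInter fun p _ =>
    isClosed_le (evalFormL p.1).continuous_of_finiteDimensional continuous_const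

def ratCone (E I : Finset (Fin N → ℤ)) : Set (Fin N → ℝ) :=
  {x | (∀ l ∈ E, evalForm l x = 0) ∧ ∀ l ∈ I, 0 ≤ evalForm l x}

namespace IsRationalCone

variable {σ : Set (Fin N → ℝ)} (h : IsRationalCone σ)
include h

lemma zero_mem : (0 : Fin N → ℝ) ∈ σ := by
  obtain ⟨E, I, rfl⟩ := h
  exact ⟨fun l _ => evalForm_zero l, fun l _ => (evalForm_zero l).ge⟩

lemma add_mem {x y : Fin N → ℝ} (hx : x ∈ σ) (hy : y ∈ σ) : x + y ∈ σ := by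
  obtain ⟨E, I, rfl⟩ := h
  exact ⟨fun l hl => by simp [hx.1 l hl, hy.1 l hl],
    fun l hl => by simpa using add_nonneg (hx.2 l hl) (hy.2 l hl)⟩

lemma smul_mem {c : ℝ} (hc : 0 ≤ c) {x : Fin N → ℝ} (hx : x ∈ σ) : c • x ∈ σ := by
  obtain ⟨E, I, rfl⟩ := h
  exact ⟨fun l hl => by simp [hx.1 l hl], fun l hl => by simpa using mul_nonneg hc (hx.2 l hl)⟩

lemma convex : Convex ℝ σ := fun _ hx _ hy _ _ ha hb _ =>
  h.add_mem (h.smul_mem ha hx) (h.smul_mem hb hy)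

end IsRationalCone

end RationalCones

section RationalStructure

variable {N : ℕ}

lemma eventually_add_mem_ratCone {E I : Finset (Fin N → ℤ)} {x₀ : Fin N → ℝ}
    (hx₀ : x₀ ∈ ratCone E I) :
    ∀ᶠ u in 𝓝 (0 : Fin N → ℝ), (∀ l ∈ E, evalForm l u = 0) →
      (∀ l ∈ I, evalForm l x₀ = 0 → evalForm l u = 0) → x₀ + u ∈ ratCone E I := by
  have hpos : ∀ᶠ u in 𝓝 (0 : Fin N → ℝ), ∀ l ∈ I, evalForm l x₀ ≠ 0 →
      0 < evalForm l (x₀ + u) := by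
    refine Filter.eventually_all_finset _ |>.2 fun l hl => ?_
    by_cases h0 : evalForm l x₀ = 0
    · exact Eventually.of_forall fun _ h => absurd h0 h
    have hcont : Continuous fun u => evalForm l (x₀ + u) :=
      (evalFormL l).continuous_of_finiteDimensional.comp (continuous_const_add x₀)
    have hx₀pos : 0 < evalForm l (x₀ + 0) := by
      simpa using lt_of_le_of_ne (hx₀.2 l hl) (Ne.symm h0)
    exact ((hcont.tendsto 0).eventually (lt_mem_nhds hx₀pos)).mono fun u hu _ => hu
  filter_upwards [hpos] with u hu hE hI
  refine ⟨fun l hl => by simp [hx₀.1 l hl, hE l hl], fun l hl => ?_⟩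
  by_cases h0 : evalForm l x₀ = 0
  · simp [h0, hI l hl h0]
  · exact (hu l hl h0).le

theorem mem_intrinsicInterior_ratCone_iff {E I : Finset (Fin N → ℤ)} {x₀ : Fin N → ℝ}
    (hx₀ : x₀ ∈ ratCone E I) :
    x₀ ∈ intrinsicInterior ℝ (ratCone E I) ↔
      ∀ l ∈ I, evalForm l x₀ = 0 → ∀ y ∈ ratCone E I, evalForm l y = 0 := by
  refine ⟨fun h l hl hl0 y hy => eq_zero_of_nonneg_of_mem_intrinsicInterior
    (f := evalFormL l) (fun z hz => hz.2 l hl) h hl0 hy, fun h => ?_⟩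
  refine mem_intrinsicInterior_iff_eventually.2 ⟨hx₀, ?_⟩
  filter_upwards [eventually_add_mem_ratCone hx₀] with u hu hV
  exact hu (fun l hl => vectorSpan_le_ker_of_eqOn (f := evalFormL l) (fun y hy => hy.1 l hl) hV)
    fun l hl hl0 => vectorSpan_le_ker_of_eqOn (f := evalFormL l) (h l hl hl0) hV

noncomputable def solSpace (F : Set (Fin N → ℤ)) : Submodule ℝ (Fin N → ℝ) :=
  ⨅ l ∈ F, LinearMap.ker (evalFormL l)

lemma mem_solSpace {F : Set (Fin N → ℤ)} {x : Fin N → ℝ} :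
    x ∈ solSpace F ↔ ∀ l ∈ F, evalForm l x = 0 := by
  simp [solSpace]

lemma vectorSpan_ratCone {E I : Finset (Fin N → ℤ)} {x₀ : Fin N → ℝ}
    (hx₀ : x₀ ∈ intrinsicInterior ℝ (ratCone E I)) :
    vectorSpan ℝ (ratCone E I) = solSpace (↑E ∪ {l | l ∈ I ∧ evalForm l x₀ = 0}) := by
  have hx₀' := intrinsicInterior_subset hx₀
  refine le_antisymm (le_iInf₂ fun l hl => ?_) fun u hu => ?_
  · rcases hl with hl | ⟨hl, hl0⟩
    · exact vectorSpan_le_ker_of_eqOn fun y hy => hy.1 l hl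
    · exact vectorSpan_le_ker_of_eqOn ((mem_intrinsicInterior_ratCone_iff hx₀').1 hx₀ l hl hl0)
  obtain ⟨t, ht, hmem⟩ := exists_pos_smul_of_eventually (eventually_add_mem_ratCone hx₀') u
  have hu' := mem_solSpace.1 hu
  have htu := vsub_mem_vectorSpan ℝ
    (hmem (fun l hl => by simp [hu' l (Or.inl hl)])
      fun l hl hl0 => by simp [hu' l (Or.inr ⟨hl, hl0⟩)]) hx₀'
  rw [vsub_eq_sub, add_sub_cancel_left] at htu
  simpa [smul_smul, inv_mul_cancel₀ ht.ne'] using Submodule.smul_mem _ t⁻¹ htu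

lemma ratCast_mem_span_solSpace {F : Set (Fin N → ℤ)} {q : Fin N → ℚ}
    (hq : ∀ l ∈ F, ∑ i, (l i : ℚ) * q i = 0) :
    (fun i => (q i : ℝ)) ∈ Submodule.span ℝ (toReal '' {v | toReal v ∈ solSpace F}) := by
  obtain ⟨⟨d, hd⟩, hdq⟩ := IsLocalization.exist_integer_multiples_of_finite (nonZeroDivisors ℤ) q
  choose w hw using hdq
  have hwq : toReal w = (d : ℝ) • fun i => (q i : ℝ) := by
    ext i
    simpa [toReal] using congrArg (fun r : ℚ => (r : ℝ)) (hw i)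
  have hwF : toReal w ∈ solSpace F := mem_solSpace.2 fun l hl => by
    have := congrArg (fun r : ℚ => (r : ℝ)) (hq l hl)
    push_cast at this
    simp only [hwq, evalForm, Pi.smul_apply, smul_eq_mul, mul_left_comm _ (d : ℝ),
      ← Finset.mul_sum, this, mul_zero]
  have hd0 : (d : ℝ) ≠ 0 := by exact_mod_cast nonZeroDivisors.ne_zero hd
  have := Submodule.smul_mem (Submodule.span ℝ (toReal '' {v | toReal v ∈ solSpace F}))
    (d : ℝ)⁻¹ (Submodule.subset_span ⟨w, hwF, rfl⟩)
  rwa [hwq, smul_smul, inv_mul_cancel₀ hd0, one_smul] at this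

/-- Expand the coordinates of a real solution in a `ℚ`-basis of `ℝ`: the coefficient vectors are
rational solutions. -/
theorem solSpace_eq_span (F : Set (Fin N → ℤ)) :
    solSpace F = Submodule.span ℝ (toReal '' {v | toReal v ∈ solSpace F}) := by
  refine le_antisymm (fun x hx => ?_) (Submodule.span_le.2 (by rintro _ ⟨v, hv, rfl⟩; exact hv))
  let B := Module.Basis.ofVectorSpace ℚ ℝ
  have hγ : ∀ j, ∀ l ∈ F, ∑ i, (l i : ℚ) * B.repr (x i) j = 0 := by
    intro j l hl
    have h0 : ∑ i, (l i : ℚ) • x i = 0 := by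
      simpa [evalForm, Rat.smul_def] using mem_solSpace.1 hx l hl
    simpa [map_sum] using congrArg (fun y => B.repr y j) h0
  let S := Finset.univ.biUnion fun i => (B.repr (x i)).support
  have hx_eq : x = ∑ j ∈ S, (B j : ℝ) • fun i => (B.repr (x i) j : ℝ) := by
    ext i
    have h1 := B.linearCombination_repr (x i)
    rw [Finsupp.linearCombination_apply, Finsupp.sum_of_support_subset _
      (Finset.subset_biUnion_of_mem (fun i => (B.repr (x i)).support) (Finset.mem_univ i)) _
      (by simp)] at h1
    conv_lhs => rw [← h1]
    simp [S, Rat.smul_def, mul_comm]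
  rw [hx_eq]
  exact Submodule.sum_mem _ fun j _ => Submodule.smul_mem _ _ (ratCast_mem_span_solSpace (hγ j))

@[simp] lemma mem_dirLattice {σ : Set (Fin N → ℝ)} {v : Fin N → ℤ} :
    v ∈ dirLattice σ ↔ toReal v ∈ vectorSpan ℝ σ :=
  Iff.rfl

lemma IsRationalCone.vectorSpan_eq_span_dirLattice {σ : Set (Fin N → ℝ)}
    (hσ : IsRationalCone σ) (hne : σ.Nonempty) :
    vectorSpan ℝ σ = Submodule.span ℝ (toReal '' (dirLattice σ : Set (Fin N → ℤ))) := by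
  obtain ⟨x₀, hx₀⟩ := hne.intrinsicInterior hσ.convex
  obtain ⟨E, I, rfl⟩ : ∃ E I, σ = ratCone E I := hσ
  have hV := vectorSpan_ratCone hx₀
  rw [hV, solSpace_eq_span]
  congr! 2
  ext v
  simp [hV]

end RationalStructure

namespace WComplex

variable {N : ℕ} {Z : WComplex N} {ρ σ τ D : Set (Fin N → ℝ)} {x : Fin N → ℝ}

lemma convex_of_mem (hσ : σ ∈ Z.polys) : Convex ℝ σ := (Z.rational σ hσ).convex

lemma polyDim_le (hσ : σ ∈ Z.polys) : polyDim σ ≤ Z.dim := (Z.pure σ hσ).1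

lemma mem_facetsAbove :
    σ ∈ Z.facetsAbove τ ↔ σ ∈ Z.polys ∧ polyDim σ = Z.dim ∧ τ ⊆ σ ∧ τ ≠ σ := by
  simp [facetsAbove, polysFinset]

lemma mem_starPolys_of_subset (hρ : ρ ∈ Z.polys) (hD : D ∈ Z.starPolys) (hρD : ρ ⊆ D) :
    ρ ∈ Z.starPolys :=
  let ⟨_, σ, hσ, hdim, hw, hDσ⟩ := hD
  ⟨hρ, σ, hσ, hdim, hw, hρD.trans hDσ⟩

lemma mem_starPolys_of_weight_ne_zero (hσ : σ ∈ Z.polys) (hdim : polyDim σ = Z.dim)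
    (hw : Z.weight σ ≠ 0) : σ ∈ Z.starPolys :=
  ⟨hσ, σ, hσ, hdim, hw, subset_rfl⟩

lemma eq_of_mem_intrinsicInterior (hρ : ρ ∈ Z.polys) (hσ : σ ∈ Z.polys) (hρσ : ρ ⊆ σ)
    (hxρ : x ∈ intrinsicInterior ℝ ρ) (hxσ : x ∈ intrinsicInterior ℝ σ) : ρ = σ :=
  (Z.decomp σ hσ x (intrinsicInterior_subset hxσ)).unique ⟨hρ, hρσ, hxρ⟩ ⟨hσ, subset_rfl, hxσ⟩

lemma subset_of_mem_intrinsicInterior (hρ : ρ ∈ Z.polys) (hD : D ∈ Z.polys)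
    (hxρ : x ∈ intrinsicInterior ℝ ρ) (hxD : x ∈ D) : ρ ⊆ D := by
  have hxρ' := intrinsicInterior_subset hxρ
  obtain ⟨η, ⟨hη, hηsub, hxη⟩, -⟩ :=
    Z.decomp (ρ ∩ D) (Z.inter_mem ρ hρ D hD ⟨x, hxρ', hxD⟩) x ⟨hxρ', hxD⟩
  rw [← eq_of_mem_intrinsicInterior hη hρ (hηsub.trans Set.inter_subset_left) hxη hxρ]
  exact hηsub.trans Set.inter_subset_right

lemma eq_of_subset_of_polyDim_le (hρ : ρ ∈ Z.polys) (hσ : σ ∈ Z.polys) (hρσ : ρ ⊆ σ)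
    (hdim : polyDim σ ≤ polyDim ρ) : ρ = σ := by
  obtain ⟨x, hx⟩ := (Z.nonempty_mem ρ hρ).intrinsicInterior (convex_of_mem hρ)
  exact eq_of_mem_intrinsicInterior hρ hσ hρσ hx (intrinsicInterior_subset_of_vectorSpan_eq hρσ
    (Submodule.eq_of_le_of_finrank_le (vectorSpan_mono ℝ hρσ) hdim) hx)

lemma exists_mem_intrinsicInterior (hD : D ∈ Z.polys) (hx : x ∈ D) :
    ∃ ρ ∈ Z.polys, ρ ⊆ D ∧ x ∈ intrinsicInterior ℝ ρ :=
  let ⟨ρ, ⟨hρ, hρD, hxρ⟩, _⟩ := Z.decomp D hD x hx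
  ⟨ρ, hρ, hρD, hxρ⟩

lemma exists_least_starPolys {s : Set (Fin N → ℝ)} (hne : s.Nonempty)
    (hs : ∃ D ∈ Z.starPolys, s ⊆ D) :
    ∃ M ∈ Z.starPolys, s ⊆ M ∧ ∀ D ∈ Z.starPolys, s ⊆ D → M ⊆ D := by
  have hT : {D | D ∈ Z.starPolys ∧ s ⊆ D}.Finite := Z.finite.subset fun D hD => hD.1.1
  obtain ⟨M, hM⟩ := hT.exists_minimal hs
  refine ⟨M, hM.prop.1, hM.prop.2, fun D hD hsD => ?_⟩
  have hMD : M ∩ D ∈ Z.polys :=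
    Z.inter_mem M hM.prop.1.1 D hD.1 (hne.mono (Set.subset_inter hM.prop.2 hsD))
  rw [← hM.eq_of_subset ⟨mem_starPolys_of_subset hMD hM.prop.1 Set.inter_subset_left,
    Set.subset_inter hM.prop.2 hsD⟩ Set.inter_subset_left]
  exact Set.inter_subset_right

end WComplex

section PrimitiveNormals

variable {N : ℕ} {τ σ ρ ν : Set (Fin N → ℝ)} {v w : Fin N → ℤ}

lemma IsPrimitiveNormal.exists_form (hv : IsPrimitiveNormal τ σ v) (h0 : (0 : Fin N → ℝ) ∈ τ)
    (hτσ : τ ⊆ σ) (hd : polyDim τ + 1 = polyDim σ) :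
    ∃ g : (Fin N → ℝ) →ₗ[ℝ] ℝ, (∀ y ∈ σ, 0 ≤ g y) ∧
      LinearMap.ker g ⊓ vectorSpan ℝ σ = vectorSpan ℝ τ ∧ 0 < g (toReal v) := by
  obtain ⟨hvσ, -, l, c, hlτ, hlσ, hlv⟩ := hv
  obtain rfl : c = 0 := by simpa using (hlτ 0 h0).symm
  have hgv : 0 < evalFormL l (toReal v) := by simpa [evalForm_toReal] using hlv
  exact ⟨evalFormL l, hlσ, inf_ker_eq_of_finrank_add_one (vectorSpan_mono ℝ hτσ) hd
    (vectorSpan_le_ker_of_eqOn hlτ) hvσ hgv.ne', hgv⟩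

lemma IsPrimitiveNormal.pos_of_nonneg (hv : IsPrimitiveNormal τ σ v)
    (h0 : (0 : Fin N → ℝ) ∈ τ) (hτσ : τ ⊆ σ) (hd : polyDim τ + 1 = polyDim σ)
    {f : (Fin N → ℝ) →ₗ[ℝ] ℝ} (hfτ : vectorSpan ℝ τ ≤ LinearMap.ker f)
    (hfσ : ∀ y ∈ σ, 0 ≤ f y) (hfne : ∃ y ∈ σ, f y ≠ 0) : 0 < f (toReal v) := by
  obtain ⟨g, hgσ, hker, hgv⟩ := hv.exists_form h0 hτσ hd
  obtain ⟨y, hy, hfy⟩ := hfne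
  have hdec := hfτ <| sub_div_smul_mem_of_inf_ker_eq hker
    (mem_vectorSpan_of_zero_mem (hτσ h0) hy) hv.1 hgv.ne'
  have hfy' : f y = g y / g (toReal v) * f (toReal v) := by
    simpa [sub_eq_zero] using hdec
  by_contra! hneg
  exact hfy (le_antisymm (hfy' ▸ mul_nonpos_of_nonneg_of_nonpos
    (div_nonneg (hgσ y hy) hgv.le) hneg) (hfσ y hy))

lemma IsPrimitiveNormal.exists_sub_zsmul_mem (hτρ : vectorSpan ℝ τ = vectorSpan ℝ ρ)
    (hσν : vectorSpan ℝ σ = vectorSpan ℝ ν) (hv : IsPrimitiveNormal τ σ v)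
    (hw : IsPrimitiveNormal ρ ν w) {f : (Fin N → ℝ) →ₗ[ℝ] ℝ}
    (hf : vectorSpan ℝ τ ≤ LinearMap.ker f) (hfw : f (toReal w) ≠ 0) :
    ∃ a : ℤ, (a = 1 ∨ a = -1) ∧ toReal (w - a • v) ∈ vectorSpan ℝ τ ∧
      f (toReal w) = a * f (toReal v) := by
  obtain ⟨a, u, hu, hwv⟩ := hv.2.1 w (hσν ▸ hw.1)
  obtain ⟨b, u', hu', hvw⟩ := hw.2.1 v (hσν ▸ hv.1)
  have hfw' : f (toReal w) = a * f (toReal v) := by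
    simp only [hwv, toReal_add, toReal_zsmul, map_add, map_smul, smul_eq_mul,
      LinearMap.mem_ker.1 (hf hu), add_zero]
  have hfv' : f (toReal v) = b * f (toReal w) := by
    simp only [hvw, toReal_add, toReal_zsmul, map_add, map_smul, smul_eq_mul,
      LinearMap.mem_ker.1 (hf (hτρ ▸ hu')), add_zero]
  have hab : a * b = 1 := by
    have : ((a * b : ℤ) : ℝ) * f (toReal w) = 1 * f (toReal w) := by
      push_cast
      linear_combination (-1 : ℝ) * hfw' - (a : ℝ) * hfv'
    exact_mod_cast mul_right_cancel₀ hfw this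
  exact ⟨a, Int.eq_one_or_neg_one_of_mul_eq_one hab, by simpa [hwv] using hu, hfw'⟩

lemma IsPrimitiveNormal.sub_mem_of_pos (hτρ : vectorSpan ℝ τ = vectorSpan ℝ ρ)
    (hσν : vectorSpan ℝ σ = vectorSpan ℝ ν) (hv : IsPrimitiveNormal τ σ v)
    (hw : IsPrimitiveNormal ρ ν w) {f : (Fin N → ℝ) →ₗ[ℝ] ℝ}
    (hf : vectorSpan ℝ τ ≤ LinearMap.ker f) (hfv : 0 < f (toReal v)) (hfw : 0 < f (toReal w)) :
    toReal (w - v) ∈ vectorSpan ℝ τ := by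
  obtain ⟨a, rfl | rfl, hmem, heq⟩ := hv.exists_sub_zsmul_mem hτρ hσν hw hf hfw.ne'
  · simpa using hmem
  · push_cast at heq
    linarith

lemma IsPrimitiveNormal.add_mem_of_neg (hτρ : vectorSpan ℝ τ = vectorSpan ℝ ρ)
    (hσν : vectorSpan ℝ σ = vectorSpan ℝ ν) (hv : IsPrimitiveNormal τ σ v)
    (hw : IsPrimitiveNormal ρ ν w) {f : (Fin N → ℝ) →ₗ[ℝ] ℝ}
    (hf : vectorSpan ℝ τ ≤ LinearMap.ker f) (hfv : 0 < f (toReal v)) (hfw : f (toReal w) < 0) :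
    toReal (w + v) ∈ vectorSpan ℝ τ := by
  obtain ⟨a, rfl | rfl, hmem, heq⟩ := hv.exists_sub_zsmul_mem hτρ hσν hw hf hfw.ne
  · push_cast at heq
    linarith
  · simpa using hmem

lemma IsPrimitiveNormal.sub_mem_of_subset
    (hv : IsPrimitiveNormal τ σ v) (hw : IsPrimitiveNormal ρ ν w) (h0τ : (0 : Fin N → ℝ) ∈ τ)
    (h0ρ : (0 : Fin N → ℝ) ∈ ρ) (hτσ : τ ⊆ σ) (hρν : ρ ⊆ ν) (hσν : σ ⊆ ν)
    (hτρ : vectorSpan ℝ τ = vectorSpan ℝ ρ) (hVσν : vectorSpan ℝ σ = vectorSpan ℝ ν)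
    (hd : polyDim τ + 1 = polyDim σ) : toReal (w - v) ∈ vectorSpan ℝ τ := by
  have hdρ : polyDim ρ + 1 = polyDim ν := by unfold polyDim at hd ⊢; rwa [← hτρ, ← hVσν]
  obtain ⟨g, hgν, hker, hgw⟩ := hw.exists_form h0ρ hρν hdρ
  have hgτ : vectorSpan ℝ τ ≤ LinearMap.ker g := hτρ ▸ hker ▸ inf_le_left
  have hgσ : ∃ y ∈ σ, g y ≠ 0 := by
    by_contra! h
    exact hgw.ne' (LinearMap.mem_ker.1 (vectorSpan_le_ker_of_eqOn h (hVσν ▸ hw.1)))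
  exact hv.sub_mem_of_pos hτρ hVσν hw hgτ
    (hv.pos_of_nonneg h0τ hτσ hd hgτ (fun y hy => hgν y (hσν hy)) hgσ) hgw

/-- A lattice vector of `σ` on which `l` takes the positive generator of `l(Λ_σ) ⊆ ℤ` is
primitive. -/
lemma exists_isPrimitiveNormal_of_form {l : Fin N → ℤ} (hlτ : ∀ x ∈ τ, evalForm l x = 0)
    (hlσ : ∀ x ∈ σ, 0 ≤ evalForm l x)
    (hker : LinearMap.ker (evalFormL l) ⊓ vectorSpan ℝ σ = vectorSpan ℝ τ)
    (hne : ∃ w ∈ dirLattice σ, pairZ l w ≠ 0) : ∃ v, IsPrimitiveNormal τ σ v := by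
  set H := (dirLattice σ).map (pairHom l)
  obtain ⟨a, ha⟩ := Int.subgroup_cyclic H
  have hH : H = AddSubgroup.zmultiples |a| := by
    rw [ha, ← AddSubgroup.zmultiples_eq_closure]
    rcases abs_choice a with h | h <;> simp [h]
  obtain ⟨v, hv, hva⟩ := AddSubgroup.mem_map.1 (hH.ge (AddSubgroup.mem_zmultiples |a|))
  rw [pairHom_apply] at hva
  have hmul : ∀ w ∈ dirLattice σ, ∃ k : ℤ, pairZ l w = k * |a| := fun w hw => by
    obtain ⟨k, hk⟩ := AddSubgroup.mem_zmultiples_iff.1 (hH.le ⟨w, hw, rfl⟩)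
    exact ⟨k, by simpa using hk.symm⟩
  have ha0 : 0 < |a| := by
    obtain ⟨w, hw, hw0⟩ := hne
    obtain ⟨k, hk⟩ := hmul w hw
    exact abs_pos.2 fun h => hw0 (by simp [hk, h])
  refine ⟨v, hv, fun w hw => ?_, l, 0, hlτ, hlσ, hva ▸ ha0⟩
  obtain ⟨k, hk⟩ := hmul w hw
  refine ⟨k, w - k • v, ?_, by abel⟩
  rw [← hker]
  refine ⟨?_, by rw [toReal_sub]; exact sub_mem hw (zsmul_mem hv k)⟩
  rw [SetLike.mem_coe, LinearMap.mem_ker, evalFormL_apply, evalForm_toReal, ← pairHom_apply,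
    map_sub, map_zsmul, pairHom_apply, pairHom_apply, hk, hva, smul_eq_mul, sub_self,
    Int.cast_zero]

theorem WComplex.exists_isPrimitiveNormal {Z : WComplex N} (hZ : Z.IsFan) (hτ : τ ∈ Z.polys)
    (hσ : σ ∈ Z.polys) (hτσ : τ ⊆ σ) (hne : τ ≠ σ) (hd : polyDim τ + 1 = polyDim σ) :
    ∃ v, IsPrimitiveNormal τ σ v := by
  obtain ⟨x₀, hx₀⟩ := (Z.nonempty_mem τ hτ).intrinsicInterior (WComplex.convex_of_mem hτ)
  have hx₀σ : x₀ ∉ intrinsicInterior ℝ σ := fun h =>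
    hne (WComplex.eq_of_mem_intrinsicInterior hτ hσ hτσ hx₀ h)
  have hσ0 := (hZ σ hσ).zero_mem
  have hspan := (hZ σ hσ).vectorSpan_eq_span_dirLattice (Z.nonempty_mem σ hσ)
  obtain ⟨E, I, rfl⟩ : ∃ E I, σ = ratCone E I := hZ σ hσ
  obtain ⟨l, hlI, hl0, y, hy, hly⟩ :
      ∃ l ∈ I, evalForm l x₀ = 0 ∧ ∃ y ∈ ratCone E I, evalForm l y ≠ 0 := by
    by_contra! h
    exact hx₀σ ((mem_intrinsicInterior_ratCone_iff (hτσ (intrinsicInterior_subset hx₀))).2 h)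
  have hlσ : ∀ y ∈ ratCone E I, 0 ≤ evalForm l y := fun y hy => hy.2 l hlI
  have hlτ : ∀ x ∈ τ, evalForm l x = 0 := fun x hx =>
    eq_zero_of_nonneg_of_mem_intrinsicInterior (f := evalFormL l) (fun z hz => hlσ z (hτσ hz))
      hx₀ hl0 hx
  have hyV := mem_vectorSpan_of_zero_mem hσ0 hy
  refine exists_isPrimitiveNormal_of_form hlτ hlσ (inf_ker_eq_of_finrank_add_one
    (vectorSpan_mono ℝ hτσ) hd (vectorSpan_le_ker_of_eqOn hlτ) hyV hly) ?_
  by_contra! hlat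
  refine hly (LinearMap.mem_ker.1 ((?_ : vectorSpan ℝ _ ≤ LinearMap.ker (evalFormL l)) hyV))
  rw [hspan, Submodule.span_le]
  rintro _ ⟨w, hw, rfl⟩
  simp [evalForm_toReal, hlat w hw]

theorem WComplex.exists_isPrimitiveNormal_family {Z : WComplex N} (hZ : Z.IsFan)
    (hτ : τ ∈ Z.polys) (hd : polyDim τ + 1 = Z.dim) :
    ∃ v : Set (Fin N → ℝ) → Fin N → ℤ, ∀ σ ∈ Z.facetsAbove τ, IsPrimitiveNormal τ σ (v σ) := by
  have h : ∀ σ ∈ Z.facetsAbove τ, ∃ v, IsPrimitiveNormal τ σ v := fun σ hσ => by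
    obtain ⟨hσ, hσd, hτσ, hne⟩ := WComplex.mem_facetsAbove.1 hσ
    exact WComplex.exists_isPrimitiveNormal hZ hτ hσ hτσ hne (hσd ▸ hd)
  choose! v hv using h
  exact ⟨v, hv⟩

end PrimitiveNormals

section Wedges

variable {N : ℕ} {τ σ : Set (Fin N → ℝ)} {x₀ : Fin N → ℝ} {f : (Fin N → ℝ) →ₗ[ℝ] ℝ}

/-- Near `x₀`, every vector of `V_σ` is a small vector of `V_τ` plus a non-negative multiple of
`p` or of `q`, according to the sign of `f`. -/
lemma IsRationalCone.mem_intrinsicInterior_of_pos_of_neg (hσ : IsRationalCone σ) (hτσ : τ ⊆ σ)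
    (hx₀ : x₀ ∈ intrinsicInterior ℝ τ)
    (hker : LinearMap.ker f ⊓ vectorSpan ℝ σ = vectorSpan ℝ τ) {p q : Fin N → ℝ}
    (hp : p ∈ σ) (hq : q ∈ σ) (hfp : 0 < f p) (hfq : f q < 0) :
    x₀ ∈ intrinsicInterior ℝ σ := by
  have hτ := (mem_intrinsicInterior_iff_eventually.1 hx₀).2
  let P (r : Fin N → ℝ) : (Fin N → ℝ) →ₗ[ℝ] (Fin N → ℝ) := LinearMap.id - (f r)⁻¹ • f.smulRight r
  have hP : ∀ r h, P r h = h - (f h / f r) • r := fun r h => by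
    simp [P, div_eq_inv_mul, mul_smul]
  have hPt : ∀ r, Tendsto (P r) (𝓝 0) (𝓝 0) := fun r => by
    simpa using (P r).continuous_of_finiteDimensional.tendsto 0
  refine mem_intrinsicInterior_iff_eventually.2 ⟨hτσ (intrinsicInterior_subset hx₀), ?_⟩
  filter_upwards [(hPt p).eventually hτ, (hPt q).eventually hτ] with h hhp hhq hV
  obtain ⟨r, hr, hfr, hc, hPr⟩ : ∃ r ∈ σ, f r ≠ 0 ∧ 0 ≤ f h / f r ∧
      (P r h ∈ vectorSpan ℝ τ → x₀ + P r h ∈ τ) := by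
    rcases le_total 0 (f h) with h0 | h0
    · exact ⟨p, hp, hfp.ne', div_nonneg h0 hfp.le, hhp⟩
    · exact ⟨q, hq, hfq.ne, div_nonneg_of_nonpos h0 hfq.le, hhq⟩
  have hPh : P r h ∈ vectorSpan ℝ τ := by
    rw [hP]
    exact sub_div_smul_mem_of_inf_ker_eq hker hV (mem_vectorSpan_of_zero_mem hσ.zero_mem hr) hfr
  have hmem := hPr hPh
  rw [hP] at hmem
  have := hσ.add_mem (hτσ hmem) (hσ.smul_mem hc hr)
  rwa [add_assoc, sub_add_cancel] at this

lemma exists_pos_of_inf_ker_eq (hker : LinearMap.ker f ⊓ vectorSpan ℝ σ = vectorSpan ℝ τ)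
    (hd : polyDim τ + 1 = polyDim σ) (hf : ∀ y ∈ σ, 0 ≤ f y) : ∃ z ∈ σ, 0 < f z := by
  by_contra! h
  have hle : vectorSpan ℝ σ ≤ vectorSpan ℝ τ := hker ▸ le_inf
    (vectorSpan_le_ker_of_eqOn fun y hy => le_antisymm (h y hy) (hf y hy)) le_rfl
  have := Submodule.finrank_mono hle
  unfold polyDim at hd
  omega

variable {Z : WComplex N} (hZ : Z.IsFan)
include hZ

lemma WComplex.nonneg_or_nonpos (hτ : τ ∈ Z.polys) (hσ : σ ∈ Z.polys) (hτσ : τ ⊆ σ)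
    (hne : τ ≠ σ) (hx₀ : x₀ ∈ intrinsicInterior ℝ τ)
    (hker : LinearMap.ker f ⊓ vectorSpan ℝ σ = vectorSpan ℝ τ) :
    (∀ y ∈ σ, 0 ≤ f y) ∨ ∀ y ∈ σ, f y ≤ 0 := by
  by_contra! h
  obtain ⟨⟨q, hq, hfq⟩, p, hp, hfp⟩ := h
  exact hne (WComplex.eq_of_mem_intrinsicInterior hτ hσ hτσ hx₀
    ((hZ σ hσ).mem_intrinsicInterior_of_pos_of_neg hτσ hx₀ hker hp hq hfp hfq))

/-- Writing a positive point of `σ₂` as a vector of `V_τ` plus a positive point of `σ₁`, a small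
push from `x₀` in its direction stays in both cones. -/
lemma WComplex.exists_mem_inter_pos {σ₁ σ₂ : Set (Fin N → ℝ)} (hτ : τ ∈ Z.polys)
    (hσ₁ : σ₁ ∈ Z.polys) (hσ₂ : σ₂ ∈ Z.polys) (hτσ₁ : τ ⊆ σ₁) (hτσ₂ : τ ⊆ σ₂)
    (hV : vectorSpan ℝ σ₁ = vectorSpan ℝ σ₂) (hd : polyDim τ + 1 = polyDim σ₁)
    (hx₀ : x₀ ∈ intrinsicInterior ℝ τ)
    (hker : LinearMap.ker f ⊓ vectorSpan ℝ σ₁ = vectorSpan ℝ τ)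
    (hf₁ : ∀ y ∈ σ₁, 0 ≤ f y) (hf₂ : ∀ y ∈ σ₂, 0 ≤ f y) : ∃ p ∈ σ₁ ∩ σ₂, 0 < f p := by
  have h0τ := (hZ τ hτ).zero_mem
  obtain ⟨z₁, hz₁, hfz₁⟩ := exists_pos_of_inf_ker_eq hker hd hf₁
  obtain ⟨z₂, hz₂, hfz₂⟩ := exists_pos_of_inf_ker_eq (hV ▸ hker)
    (by unfold polyDim at hd ⊢; rwa [← hV]) hf₂
  have hu := sub_div_smul_mem_of_inf_ker_eq hker
    (hV ▸ mem_vectorSpan_of_zero_mem (hτσ₂ h0τ) hz₂)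
    (mem_vectorSpan_of_zero_mem (hτσ₁ h0τ) hz₁) hfz₁.ne'
  obtain ⟨s, hs, hsτ⟩ := exists_pos_add_smul_mem hx₀ hu
  refine ⟨x₀ + s • z₂, ⟨?_, (hZ σ₂ hσ₂).add_mem (hτσ₂ (intrinsicInterior_subset hx₀))
    ((hZ σ₂ hσ₂).smul_mem hs.le hz₂)⟩, ?_⟩
  · convert (hZ σ₁ hσ₁).add_mem (hτσ₁ hsτ)
      ((hZ σ₁ hσ₁).smul_mem (by positivity : 0 ≤ s * (f z₂ / f z₁)) hz₁) using 1
    module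
  · have hfx₀ : f x₀ = 0 := LinearMap.mem_ker.1 ((hker ▸ inf_le_left : vectorSpan ℝ τ ≤ _)
      (mem_vectorSpan_of_zero_mem h0τ (intrinsicInterior_subset hx₀)))
    simpa [hfx₀] using mul_pos hs hfz₂

lemma WComplex.eq_of_nonneg {σ₁ σ₂ : Set (Fin N → ℝ)} (hτ : τ ∈ Z.polys)
    (hσ₁ : σ₁ ∈ Z.polys) (hσ₂ : σ₂ ∈ Z.polys) (hτσ₁ : τ ⊆ σ₁) (hτσ₂ : τ ⊆ σ₂)
    (hV : vectorSpan ℝ σ₁ = vectorSpan ℝ σ₂) (hd : polyDim τ + 1 = polyDim σ₁)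
    (hx₀ : x₀ ∈ intrinsicInterior ℝ τ)
    (hker : LinearMap.ker f ⊓ vectorSpan ℝ σ₁ = vectorSpan ℝ τ)
    (hf₁ : ∀ y ∈ σ₁, 0 ≤ f y) (hf₂ : ∀ y ∈ σ₂, 0 ≤ f y) : σ₁ = σ₂ := by
  obtain ⟨p, hp, hfp⟩ :=
    Z.exists_mem_inter_pos hZ hτ hσ₁ hσ₂ hτσ₁ hτσ₂ hV hd hx₀ hker hf₁ hf₂
  have hσ₁₂ := Z.inter_mem σ₁ hσ₁ σ₂ hσ₂ ⟨p, hp⟩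
  have hlt : vectorSpan ℝ τ < vectorSpan ℝ (σ₁ ∩ σ₂) := by
    refine lt_of_le_of_ne (vectorSpan_mono ℝ (Set.subset_inter hτσ₁ hτσ₂)) fun heq => ?_
    have h0 : (0 : Fin N → ℝ) ∈ σ₁ ∩ σ₂ := ⟨hτσ₁ (hZ τ hτ).zero_mem, hτσ₂ (hZ τ hτ).zero_mem⟩
    exact hfp.ne' (LinearMap.mem_ker.1 ((hker ▸ inf_le_left : vectorSpan ℝ τ ≤ _)
      (heq ▸ mem_vectorSpan_of_zero_mem h0 hp)))
  have hdim := Submodule.finrank_lt_finrank_of_lt hlt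
  have h₁ := WComplex.eq_of_subset_of_polyDim_le hσ₁₂ hσ₁ Set.inter_subset_left
    (by unfold polyDim at hd ⊢; omega)
  have h₂ := WComplex.eq_of_subset_of_polyDim_le hσ₁₂ hσ₂ Set.inter_subset_right
    (by unfold polyDim at hd ⊢; rw [← hV]; omega)
  rw [← h₁, h₂]

lemma WComplex.eq_or_eq_of_nonneg_of_nonpos {σ σ₁ σ₂ : Set (Fin N → ℝ)} (hτ : τ ∈ Z.polys)
    (hσ : σ ∈ Z.polys) (hσ₁ : σ₁ ∈ Z.polys) (hσ₂ : σ₂ ∈ Z.polys) (hτσ : τ ⊆ σ) (hτσ₁ : τ ⊆ σ₁)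
    (hτσ₂ : τ ⊆ σ₂) (hne : τ ≠ σ) (hV₁ : vectorSpan ℝ σ = vectorSpan ℝ σ₁)
    (hV₂ : vectorSpan ℝ σ = vectorSpan ℝ σ₂) (hd : polyDim τ + 1 = polyDim σ)
    (hx₀ : x₀ ∈ intrinsicInterior ℝ τ)
    (hker : LinearMap.ker f ⊓ vectorSpan ℝ σ = vectorSpan ℝ τ)
    (hf₁ : ∀ y ∈ σ₁, 0 ≤ f y) (hf₂ : ∀ y ∈ σ₂, f y ≤ 0) : σ = σ₁ ∨ σ = σ₂ := by
  rcases Z.nonneg_or_nonpos hZ hτ hσ hτσ hne hx₀ hker with h | h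
  · exact .inl (Z.eq_of_nonneg hZ hτ hσ hσ₁ hτσ hτσ₁ hV₁ hd hx₀ hker h hf₁)
  · refine .inr (Z.eq_of_nonneg hZ hτ hσ hσ₂ hτσ hτσ₂ hV₂ hd hx₀ (f := -f)
      (by rwa [LinearMap.ker_neg]) (fun y hy => ?_) fun y hy => ?_)
    · simpa using h y hy
    · simpa using hf₂ y hy

end Wedges

namespace WComplex

variable {N : ℕ} {Z : WComplex N} {τ : Set (Fin N → ℝ)} {x₀ : Fin N → ℝ}

lemma weight_eq_zero_of_notMem_starPolys (hτ : τ ∈ Z.polys) (hτZ : τ ∉ Z.starPolys)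
    {σ : Set (Fin N → ℝ)} (hσ : σ ∈ Z.facetsAbove τ) : Z.weight σ = 0 := by
  obtain ⟨hσ, hσd, hτσ, -⟩ := mem_facetsAbove.1 hσ
  by_contra hw
  exact hτZ ⟨hτ, σ, hσ, hσd, hw, hτσ⟩

lemma isTropical_of_forall_starPolys (hZ : Z.IsFan)
    (h : ∀ τ ∈ Z.starPolys, polyDim τ + 1 = Z.dim → ∀ v : Set (Fin N → ℝ) → Fin N → ℤ,
      (∀ σ ∈ Z.facetsAbove τ, IsPrimitiveNormal τ σ (v σ)) →
        toReal (∑ σ ∈ Z.facetsAbove τ, Z.weight σ • v σ) ∈ vectorSpan ℝ τ) :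
    Z.IsTropical := by
  intro τ hτ hd
  obtain ⟨v, hv⟩ := exists_isPrimitiveNormal_family hZ hτ hd
  refine ⟨v, hv, ?_⟩
  by_cases hτZ : τ ∈ Z.starPolys
  · exact h τ hτZ hd v hv
  · rw [Finset.sum_eq_zero fun σ hσ => by
      rw [weight_eq_zero_of_notMem_starPolys hτ hτZ hσ, zero_smul], toReal_zero]
    exact zero_mem _

lemma exists_facet_mem_of_segment (hτ : τ ∈ Z.polys) (hx₀ : x₀ ∈ intrinsicInterior ℝ τ)
    {y : Fin N → ℝ} (hseg : ∀ t ∈ Set.Ioc (0 : ℝ) 1, x₀ + t • (y - x₀) ∈ Z.starSupport) :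
    ∃ σ ∈ Z.polys, polyDim σ = Z.dim ∧ Z.weight σ ≠ 0 ∧ τ ⊆ σ ∧
      ∃ t ∈ Set.Ioc (0 : ℝ) 1, x₀ + t • (y - x₀) ∈ σ := by
  have ht : ∀ n : ℕ, 1 / ((n : ℝ) + 1) ∈ Set.Ioc (0 : ℝ) 1 := fun n =>
    ⟨by positivity, (div_le_one (by positivity)).2 (by simp)⟩
  have hlim : Tendsto (fun n : ℕ => x₀ + (1 / ((n : ℝ) + 1)) • (y - x₀)) atTop (𝓝 x₀) := by
    simpa using
      ((tendsto_one_div_add_atTop_nhds_zero_nat (𝕜 := ℝ)).smul_const (y - x₀)).const_add x₀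
  obtain ⟨C, ⟨-, σ, hσ, hσd, hσw, hCσ⟩, hx₀C, n, hnC⟩ := exists_mem_of_tendsto_of_finite_closed
    (Z.finite.subset fun C hC => hC.1) (fun C hC => (Z.rational C hC.1).isClosed)
    (fun n => hseg _ (ht n)) hlim
  exact ⟨σ, hσ, hσd, hσw, subset_of_mem_intrinsicInterior hτ hσ hx₀ (hCσ hx₀C), _, ht n, hCσ hnC⟩

lemma vectorSpan_le_of_mem_intrinsicInterior (hZ : Z.IsFan) {ρ D : Set (Fin N → ℝ)}
    (hρ : ρ ∈ Z.polys) (hD : D ∈ Z.polys) (hρD : ρ ⊆ D) (hτD : τ ⊆ D)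
    (hdD : polyDim D ≤ polyDim ρ + 1) (hx₀τ : x₀ ∈ intrinsicInterior ℝ τ)
    (hx₀ρ : x₀ ∈ intrinsicInterior ℝ ρ) : vectorSpan ℝ τ ≤ vectorSpan ℝ ρ := by
  by_cases hρD' : ρ = D
  · exact hρD' ▸ vectorSpan_mono ℝ hτD
  have hd : polyDim ρ + 1 = polyDim D := by
    have : polyDim ρ < polyDim D := by
      by_contra! h
      exact hρD' (eq_of_subset_of_polyDim_le hρ hD hρD h)
    omega
  have h0 := (hZ ρ hρ).zero_mem
  obtain ⟨v, hv⟩ := exists_isPrimitiveNormal hZ hρ hD hρD hρD' hd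
  obtain ⟨g, hgD, hker, -⟩ := hv.exists_form h0 hρD hd
  have hgx₀ : g x₀ = 0 := LinearMap.mem_ker.1
    (hker.ge (mem_vectorSpan_of_zero_mem h0 (intrinsicInterior_subset hx₀ρ))).1
  rw [← hker]
  exact le_inf (vectorSpan_le_ker_of_eqOn fun y hy => eq_zero_of_nonneg_of_mem_intrinsicInterior
    (fun z hz => hgD z (hτD hz)) hx₀τ hgx₀ hy) (vectorSpan_mono ℝ hτD)

end WComplex

/-- Both facets lie on the non-negative side of a form cutting `ρ` out of `ν`. -/
lemma eq_of_subset_facet {N : ℕ} {X Y : WComplex N} (hX : X.IsFan) (hY : Y.IsFan)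
    {τ ρ ν σ₁ σ₂ : Set (Fin N → ℝ)} {x₀ : Fin N → ℝ} (hτ : τ ∈ Y.polys) (hρ : ρ ∈ X.polys)
    (hν : ν ∈ X.facetsAbove ρ) (hdρ : polyDim ρ + 1 = X.dim)
    (hVτρ : vectorSpan ℝ τ = vectorSpan ℝ ρ) (hx₀ : x₀ ∈ intrinsicInterior ℝ τ)
    (hσ₁ : σ₁ ∈ Y.polys) (hσ₂ : σ₂ ∈ Y.polys) (hτσ₁ : τ ⊆ σ₁) (hτσ₂ : τ ⊆ σ₂)
    (hσ₁ν : σ₁ ⊆ ν) (hσ₂ν : σ₂ ⊆ ν) (hV₁ : vectorSpan ℝ σ₁ = vectorSpan ℝ ν)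
    (hV₂ : vectorSpan ℝ σ₂ = vectorSpan ℝ ν) : σ₁ = σ₂ := by
  obtain ⟨hνX, hνd, hρν, hne⟩ := WComplex.mem_facetsAbove.1 hν
  have hd : polyDim ρ + 1 = polyDim ν := hνd ▸ hdρ
  obtain ⟨v, hv⟩ := WComplex.exists_isPrimitiveNormal hX hρ hνX hρν hne hd
  obtain ⟨g, hg, hker, -⟩ := hv.exists_form (hX ρ hρ).zero_mem hρν hd
  refine Y.eq_of_nonneg hY hτ hσ₁ hσ₂ hτσ₁ hτσ₂ (hV₁.trans hV₂.symm) ?_ hx₀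
    (by rw [hV₁, hker, hVτρ]) (fun y hy => hg y (hσ₁ν hy)) fun y hy => hg y (hσ₂ν hy)
  unfold polyDim at hd ⊢
  rwa [hV₁, hVτρ]

namespace Refines

variable {N : ℕ} {X Y : WComplex N} (h : Refines Y X)
  {τ ρ σ μ : Set (Fin N → ℝ)} {x₀ : Fin N → ℝ}
include h

lemma least_starPolys_spec (hdim : Y.dim = X.dim) {M : Set (Fin N → ℝ)} (hσ : σ ∈ Y.polys)
    (hσd : polyDim σ = Y.dim) (hσw : Y.weight σ ≠ 0) (hM : M ∈ X.starPolys) (hσM : σ ⊆ M)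
    (hleast : ∀ D ∈ X.starPolys, σ ⊆ D → M ⊆ D) :
    polyDim M = X.dim ∧ X.weight M = Y.weight σ ∧ vectorSpan ℝ σ = vectorSpan ℝ M := by
  have hle : polyDim σ ≤ polyDim M := Submodule.finrank_mono (vectorSpan_mono ℝ hσM)
  have hMd := WComplex.polyDim_le hM.1
  refine ⟨by omega,
    (h.2.2 σ (WComplex.mem_starPolys_of_weight_ne_zero hσ hσd hσw) hσd M ⟨hM, hσM, hleast⟩).symm,
    Submodule.eq_of_le_of_finrank_le (vectorSpan_mono ℝ hσM) (show polyDim M ≤ polyDim σ by omega)⟩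

lemma exists_facetsAbove_superset (hdim : Y.dim = X.dim) (hρ : ρ ∈ X.polys)
    (hdρ : polyDim ρ + 1 = X.dim) (hx₀τ : x₀ ∈ τ) (hx₀ρ : x₀ ∈ intrinsicInterior ℝ ρ)
    (hσ : σ ∈ Y.facetsAbove τ) (hσw : Y.weight σ ≠ 0) :
    ∃ ν ∈ X.facetsAbove ρ, σ ⊆ ν ∧ X.weight ν = Y.weight σ ∧
      vectorSpan ℝ σ = vectorSpan ℝ ν := by
  obtain ⟨hσY, hσd, hτσ, -⟩ := WComplex.mem_facetsAbove.1 hσ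
  obtain ⟨ν, hν, hσν, hleast⟩ := X.exists_least_starPolys (Y.nonempty_mem σ hσY)
    (h.1 σ (WComplex.mem_starPolys_of_weight_ne_zero hσY hσd hσw))
  obtain ⟨hνd, hw, hV⟩ := h.least_starPolys_spec hdim hσY hσd hσw hν hσν hleast
  refine ⟨ν, WComplex.mem_facetsAbove.2 ⟨hν.1, hνd,
    X.subset_of_mem_intrinsicInterior hρ hν.1 hx₀ρ (hσν (hτσ hx₀τ)), ?_⟩, hσν, hw, hV⟩
  rintro rfl
  omega

lemma vectorSpan_eq (hX : X.IsFan) (hτ : τ ∈ Y.starPolys) (hρ : ρ ∈ X.polys)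
    (hx₀τ : x₀ ∈ intrinsicInterior ℝ τ) (hx₀ρ : x₀ ∈ intrinsicInterior ℝ ρ)
    (hdτ : polyDim τ + 1 = X.dim) (hdρ : polyDim ρ + 1 = X.dim) :
    vectorSpan ℝ τ = vectorSpan ℝ ρ := by
  obtain ⟨D, hD, hτD⟩ := h.1 τ hτ
  have hρD := X.subset_of_mem_intrinsicInterior hρ hD.1 hx₀ρ (hτD (intrinsicInterior_subset hx₀τ))
  have hDd := WComplex.polyDim_le hD.1
  exact Submodule.eq_of_le_of_finrank_le (WComplex.vectorSpan_le_of_mem_intrinsicInterior hX hρ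
    hD.1 hρD hτD (by omega) hx₀τ hx₀ρ) (show polyDim ρ ≤ polyDim τ by omega)

/-- Approaching `x₀` from inside `ν`, the points met by a facet of `Y*` above `τ` lie in the
relative interior of `ν`. -/
lemma exists_facetsAbove_forall_subset (hdim : Y.dim = X.dim) (hτ : τ ∈ Y.polys)
    (hx₀τ : x₀ ∈ intrinsicInterior ℝ τ) (hdτ : polyDim τ + 1 = X.dim) {ν : Set (Fin N → ℝ)}
    (hν : ν ∈ X.polys) (hνd : polyDim ν = X.dim) (hνw : X.weight ν ≠ 0) (hx₀ν : x₀ ∈ ν) :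
    ∃ σ ∈ Y.facetsAbove τ, Y.weight σ ≠ 0 ∧ ∀ M ∈ X.polys, σ ⊆ M → ν ⊆ M := by
  have hνc := WComplex.convex_of_mem hν
  obtain ⟨y, hy⟩ := (X.nonempty_mem ν hν).intrinsicInterior hνc
  have hseg : ∀ t ∈ Set.Ioc (0 : ℝ) 1, x₀ + t • (y - x₀) ∈ intrinsicInterior ℝ ν := fun t ht =>
    hνc.add_smul_sub_mem_intrinsicInterior hx₀ν hy ht
  obtain ⟨σ, hσ, hσd, hσw, hτσ, t, ht, hσt⟩ := Y.exists_facet_mem_of_segment hτ hx₀τ fun t ht => by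
    rw [h.2.1]
    exact ⟨ν, WComplex.mem_starPolys_of_weight_ne_zero hν hνd hνw,
      intrinsicInterior_subset (hseg t ht)⟩
  refine ⟨σ, WComplex.mem_facetsAbove.2 ⟨hσ, hσd, hτσ, ?_⟩, hσw, fun M hM hσM =>
    X.subset_of_mem_intrinsicInterior hν hM (hseg t ht) (hσM hσt)⟩
  rintro rfl
  omega

theorem sum_sub_sum_mem_vectorSpan (hX : X.IsFan) (hY : Y.IsFan) (hdim : Y.dim = X.dim)
    (hτ : τ ∈ Y.polys) (hρ : ρ ∈ X.polys)
    (hx₀τ : x₀ ∈ intrinsicInterior ℝ τ) (hx₀ρ : x₀ ∈ intrinsicInterior ℝ ρ)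
    (hdτ : polyDim τ + 1 = X.dim) (hdρ : polyDim ρ + 1 = X.dim)
    (hVτρ : vectorSpan ℝ τ = vectorSpan ℝ ρ) {vY vX : Set (Fin N → ℝ) → Fin N → ℤ}
    (hvY : ∀ σ ∈ Y.facetsAbove τ, IsPrimitiveNormal τ σ (vY σ))
    (hvX : ∀ ν ∈ X.facetsAbove ρ, IsPrimitiveNormal ρ ν (vX ν)) :
    toReal (∑ σ ∈ Y.facetsAbove τ, Y.weight σ • vY σ -
      ∑ ν ∈ X.facetsAbove ρ, X.weight ν • vX ν) ∈ vectorSpan ℝ τ := by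
  classical
  set A := (Y.facetsAbove τ).filter (Y.weight · ≠ 0)
  set B := (X.facetsAbove ρ).filter (X.weight · ≠ 0)
  have hA : ∀ σ ∈ A, σ ∈ Y.polys ∧ polyDim σ = Y.dim ∧ τ ⊆ σ ∧ τ ≠ σ := fun σ hσ =>
    WComplex.mem_facetsAbove.1 (Finset.mem_filter.1 hσ).1
  choose! Φ hΦ using fun σ (hσ : σ ∈ A) => h.exists_facetsAbove_superset hdim hρ hdρ
    (intrinsicInterior_subset hx₀τ) hx₀ρ (Finset.mem_filter.1 hσ).1 (Finset.mem_filter.1 hσ).2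
  have hinj : Set.InjOn Φ A := fun σ₁ h₁ σ₂ h₂ h₁₂ => eq_of_subset_facet hX hY hτ hρ (hΦ σ₁ h₁).1
    hdρ hVτρ hx₀τ (hA σ₁ h₁).1 (hA σ₂ h₂).1 (hA σ₁ h₁).2.2.1 (hA σ₂ h₂).2.2.1 (hΦ σ₁ h₁).2.1
    (h₁₂ ▸ (hΦ σ₂ h₂).2.1) (hΦ σ₁ h₁).2.2.2 (h₁₂ ▸ (hΦ σ₂ h₂).2.2.2)
  have himage : A.image Φ = B := by
    refine Finset.Subset.antisymm (Finset.image_subset_iff.2 fun σ hσ => Finset.mem_filter.2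
      ⟨(hΦ σ hσ).1, (hΦ σ hσ).2.2.1 ▸ (Finset.mem_filter.1 hσ).2⟩) fun ν hν => ?_
    obtain ⟨hν, hνw⟩ := Finset.mem_filter.1 hν
    obtain ⟨hνX, hνd, hρν, -⟩ := WComplex.mem_facetsAbove.1 hν
    obtain ⟨σ, hσ, hσw, hνσ⟩ := h.exists_facetsAbove_forall_subset hdim hτ hx₀τ hdτ hνX hνd hνw
      (hρν (intrinsicInterior_subset hx₀ρ))
    have hσA : σ ∈ A := Finset.mem_filter.2 ⟨hσ, hσw⟩
    obtain ⟨hΦX, hΦd, -⟩ := WComplex.mem_facetsAbove.1 (hΦ σ hσA).1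
    exact Finset.mem_image.2 ⟨σ, hσA, (X.eq_of_subset_of_polyDim_le hνX hΦX
      (hνσ _ hΦX (hΦ σ hσA).2.1) (hνd ▸ hΦd.le)).symm⟩
  have hmatch : ∀ σ ∈ A, toReal (vX (Φ σ) - vY σ) ∈ vectorSpan ℝ τ := fun σ hσ =>
    (hvY σ (Finset.mem_filter.1 hσ).1).sub_mem_of_subset (hvX _ (hΦ σ hσ).1) (hY τ hτ).zero_mem
      (hX ρ hρ).zero_mem (hA σ hσ).2.2.1 (WComplex.mem_facetsAbove.1 (hΦ σ hσ).1).2.2.1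
      (hΦ σ hσ).2.1 hVτρ (hΦ σ hσ).2.2.2 (by rw [(hA σ hσ).2.1, hdim, hdτ])
  rw [← Finset.sum_filter_of_ne (s := Y.facetsAbove τ) (p := (Y.weight · ≠ 0))
      fun σ _ hne hw => hne (by simp [hw]),
    ← Finset.sum_filter_of_ne (s := X.facetsAbove ρ) (p := (X.weight · ≠ 0))
      fun ν _ hne hw => hne (by simp [hw])]
  change toReal (∑ σ ∈ A, Y.weight σ • vY σ - ∑ ν ∈ B, X.weight ν • vX ν) ∈ _
  rw [← himage, Finset.sum_image hinj, ← Finset.sum_sub_distrib, toReal_sum]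
  refine Submodule.sum_mem _ fun σ hσ => ?_
  rw [(hΦ σ hσ).2.2.1, ← smul_sub, toReal_zsmul, ← neg_sub, toReal_neg]
  exact Submodule.smul_mem _ _ (neg_mem (hmatch σ hσ))

lemma weight_vectorSpan_eq_of_mem_intrinsicInterior (hdim : Y.dim = X.dim) (hσ : σ ∈ Y.polys)
    (hσd : polyDim σ = Y.dim) (hσw : Y.weight σ ≠ 0) (hρ : ρ ∈ X.polys) (hρd : polyDim ρ = X.dim)
    (hx₀ρ : x₀ ∈ intrinsicInterior ℝ ρ) (hx₀σ : x₀ ∈ σ) :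
    Y.weight σ = X.weight ρ ∧ vectorSpan ℝ σ = vectorSpan ℝ ρ := by
  obtain ⟨M, hM, hσM, hleast⟩ := X.exists_least_starPolys (Y.nonempty_mem σ hσ)
    (h.1 σ (WComplex.mem_starPolys_of_weight_ne_zero hσ hσd hσw))
  obtain ⟨-, hw, hV⟩ := h.least_starPolys_spec hdim hσ hσd hσw hM hσM hleast
  obtain rfl : ρ = M := X.eq_of_subset_of_polyDim_le hρ hM.1
    (X.subset_of_mem_intrinsicInterior hρ hM.1 hx₀ρ (hσM hx₀σ)) (hρd ▸ X.polyDim_le hM.1)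
  exact ⟨hw.symm, hV⟩

lemma exists_facet_mem_sub_smul (hτ : τ ∈ Y.polys) (hx₀τ : x₀ ∈ intrinsicInterior ℝ τ)
    (hρ : ρ ∈ X.starPolys) (hx₀ρ : x₀ ∈ intrinsicInterior ℝ ρ) {z : Fin N → ℝ}
    (hz : z ∈ vectorSpan ℝ ρ) :
    ∃ σ ∈ Y.polys, polyDim σ = Y.dim ∧ Y.weight σ ≠ 0 ∧ τ ⊆ σ ∧
      ∃ t : ℝ, 0 < t ∧ x₀ - t • z ∈ σ := by
  obtain ⟨s, hs, hsρ⟩ := exists_pos_add_smul_mem hx₀ρ (neg_mem hz)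
  have hseg : ∀ t ∈ Set.Ioc (0 : ℝ) 1, x₀ + t • (x₀ + s • -z - x₀) ∈ Y.starSupport :=
    fun t ht => by
      rw [h.2.1]
      exact ⟨ρ, hρ, (X.convex_of_mem hρ.1).add_smul_sub_mem (intrinsicInterior_subset hx₀ρ) hsρ
        (Set.Ioc_subset_Icc_self ht)⟩
  obtain ⟨σ, hσ, hσd, hσw, hτσ, t, ht, hσt⟩ := Y.exists_facet_mem_of_segment hτ hx₀τ hseg
  refine ⟨σ, hσ, hσd, hσw, hτσ, t * s, mul_pos ht.1 hs, ?_⟩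
  convert hσt using 1
  module

lemma exists_facetsAbove_nonpos (hY : Y.IsFan) (hdim : Y.dim = X.dim) (hτ : τ ∈ Y.polys)
    (hdτ : polyDim τ + 1 = X.dim) (hx₀τ : x₀ ∈ intrinsicInterior ℝ τ) (hρ : ρ ∈ X.starPolys)
    (hx₀ρ : x₀ ∈ intrinsicInterior ℝ ρ) {g : (Fin N → ℝ) →ₗ[ℝ] ℝ}
    (hgτ : vectorSpan ℝ τ ≤ LinearMap.ker g) {z : Fin N → ℝ} (hz : z ∈ vectorSpan ℝ ρ)
    (hgz : 0 < g z) (hker : ∀ σ ∈ Y.facetsAbove τ, Y.weight σ ≠ 0 →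
      LinearMap.ker g ⊓ vectorSpan ℝ σ = vectorSpan ℝ τ) :
    ∃ σ ∈ Y.facetsAbove τ, Y.weight σ ≠ 0 ∧ (∀ y ∈ σ, g y ≤ 0) ∧ ∃ y ∈ σ, g y < 0 := by
  obtain ⟨σ, hσ, hσd, hσw, hτσ, t, ht, hσt⟩ := h.exists_facet_mem_sub_smul hτ hx₀τ hρ hx₀ρ hz
  have hne : τ ≠ σ := by rintro rfl; omega
  have hgt : g (x₀ - t • z) < 0 := by
    rw [map_sub, map_smul, LinearMap.mem_ker.1 (hgτ (mem_vectorSpan_of_zero_mem (hY τ hτ).zero_mem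
      (intrinsicInterior_subset hx₀τ)))]
    simpa using mul_pos ht hgz
  have hσA := WComplex.mem_facetsAbove.2 ⟨hσ, hσd, hτσ, hne⟩
  exact ⟨σ, hσA, hσw, (Y.nonneg_or_nonpos hY hτ hσ hτσ hne hx₀τ (hker σ hσA hσw)).resolve_left
    fun h' => (h' _ hσt).not_gt hgt, _, hσt, hgt⟩

theorem sum_mem_vectorSpan_of_facet (hY : Y.IsFan) (hdim : Y.dim = X.dim)
    (hτ : τ ∈ Y.starPolys) (hdτ : polyDim τ + 1 = X.dim) (hρ : ρ ∈ X.polys)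
    (hdρ : polyDim ρ = X.dim) (hx₀τ : x₀ ∈ intrinsicInterior ℝ τ)
    (hx₀ρ : x₀ ∈ intrinsicInterior ℝ ρ) {vY : Set (Fin N → ℝ) → Fin N → ℤ}
    (hvY : ∀ σ ∈ Y.facetsAbove τ, IsPrimitiveNormal τ σ (vY σ)) :
    toReal (∑ σ ∈ Y.facetsAbove τ, Y.weight σ • vY σ) ∈ vectorSpan ℝ τ := by
  obtain ⟨hτY, σs, hσs, hσsd, hσsw, hτσs⟩ := hτ
  have h0 := (hY τ hτY).zero_mem
  have hfacet : ∀ σ ∈ Y.facetsAbove τ, Y.weight σ ≠ 0 → τ ⊆ σ ∧ τ ≠ σ ∧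
      polyDim τ + 1 = polyDim σ ∧ Y.weight σ = X.weight ρ ∧
        vectorSpan ℝ σ = vectorSpan ℝ ρ := fun σ hσ hw => by
    obtain ⟨hσ, hσd, hτσ, hne⟩ := WComplex.mem_facetsAbove.1 hσ
    exact ⟨hτσ, hne, by omega, h.weight_vectorSpan_eq_of_mem_intrinsicInterior hdim hσ hσd hw
      hρ hdρ hx₀ρ (hτσ (intrinsicInterior_subset hx₀τ))⟩
  have hσsA : σs ∈ Y.facetsAbove τ :=
    WComplex.mem_facetsAbove.2 ⟨hσs, hσsd, hτσs, by rintro rfl; omega⟩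
  obtain ⟨-, -, hds, hws, hVs⟩ := hfacet σs hσsA hσsw
  obtain ⟨g, hgσs, hker, hgv⟩ := (hvY σs hσsA).exists_form h0 hτσs hds
  have hgτ : vectorSpan ℝ τ ≤ LinearMap.ker g := hker ▸ inf_le_left
  have hkerσ : ∀ σ ∈ Y.facetsAbove τ, Y.weight σ ≠ 0 →
      LinearMap.ker g ⊓ vectorSpan ℝ σ = vectorSpan ℝ τ := fun σ hσ hw => by
    rw [(hfacet σ hσ hw).2.2.2.2, ← hVs, hker]
  obtain ⟨σm, hσmA, hσmw, hσmneg, y, hy, hgy⟩ := h.exists_facetsAbove_nonpos hY hdim hτY hdτ hx₀τ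
    (WComplex.mem_starPolys_of_weight_ne_zero hρ hdρ (hws ▸ hσsw)) hx₀ρ hgτ
    (hVs ▸ (hvY σs hσsA).1) hgv hkerσ
  obtain ⟨hτσm, -, hdm, hwm, hVm⟩ := hfacet σm hσmA hσmw
  have hdich : ∀ σ ∈ Y.facetsAbove τ, Y.weight σ ≠ 0 → σ = σs ∨ σ = σm := fun σ hσ hw => by
    obtain ⟨hτσ, hne, hd, -, hV⟩ := hfacet σ hσ hw
    exact Y.eq_or_eq_of_nonneg_of_nonpos hY hτY (WComplex.mem_facetsAbove.1 hσ).1 hσs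
      (WComplex.mem_facetsAbove.1 hσmA).1 hτσ hτσs hτσm hne (hV.trans hVs.symm)
      (hV.trans hVm.symm) hd hx₀τ (hkerσ σ hσ hw) hgσs hσmneg
  have hne : σs ≠ σm := by rintro rfl; exact (hgσs y hy).not_gt hgy
  have hgm : 0 < (-g) (toReal (vY σm)) := (hvY σm hσmA).pos_of_nonneg h0 hτσm hdm
    (by rwa [LinearMap.ker_neg]) (fun y hy => by simpa using hσmneg y hy)
    ⟨y, hy, by rw [LinearMap.neg_apply]; exact neg_ne_zero.2 hgy.ne⟩
  have hopp := (hvY σs hσsA).add_mem_of_neg rfl (hVs.trans hVm.symm) (hvY σm hσmA) hgτ hgv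
    (by simpa using hgm)
  rw [Finset.sum_eq_add_of_mem σs σm hσsA hσmA hne fun σ hσ hσ' => by
    by_cases hw : Y.weight σ = 0
    · rw [hw, zero_smul]
    · exact ((hdich σ hσ hw).elim hσ'.1 hσ'.2).elim, hws, hwm, ← smul_add, add_comm,
    toReal_zsmul]
  exact Submodule.smul_mem _ _ hopp

lemma polyDim_ne_of_mem_intrinsicInterior (hτ : τ ∈ Y.starPolys) (hμ : μ ∈ X.polys)
    (hdμ : polyDim μ + 1 = X.dim) (hx₀τ : x₀ ∈ intrinsicInterior ℝ τ)
    (hx₀μ : x₀ ∈ intrinsicInterior ℝ μ) : polyDim τ ≠ X.dim := by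
  intro hτd
  obtain ⟨D, hD, hτD⟩ := h.1 τ hτ
  have hx₀D := intrinsicInterior_subset_of_vectorSpan_eq hτD (Submodule.eq_of_le_of_finrank_le
    (vectorSpan_mono ℝ hτD) (show polyDim D ≤ polyDim τ by rw [hτd]; exact X.polyDim_le hD.1))
    hx₀τ
  obtain rfl := X.eq_of_mem_intrinsicInterior hμ hD.1 (X.subset_of_mem_intrinsicInterior hμ
    hD.1 hx₀μ (intrinsicInterior_subset hx₀D)) hx₀μ hx₀D
  have : polyDim τ ≤ polyDim μ := Submodule.finrank_mono (vectorSpan_mono ℝ hτD)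
  omega

theorem isTropical_of_isTropical_coarsening (hX : X.IsFan) (hY : Y.IsFan) (hdim : Y.dim = X.dim)
    (hXt : X.IsTropical) : Y.IsTropical := by
  refine Y.isTropical_of_forall_starPolys hY fun τ hτ hdτ vY hvY => ?_
  rw [hdim] at hdτ
  obtain ⟨x₀, hx₀τ, hgen⟩ := exists_mem_intrinsicInterior_forall_finrank_le
    (Y.convex_of_mem hτ.1) (Y.nonempty_mem τ hτ.1) X.finite
  obtain ⟨D, hD, hτD⟩ := h.1 τ hτ
  obtain ⟨ρ, hρ, -, hx₀ρ⟩ := X.exists_mem_intrinsicInterior hD.1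
    (hτD (intrinsicInterior_subset hx₀τ))
  have hτρ : polyDim τ ≤ polyDim ρ := hgen ρ hρ (intrinsicInterior_subset hx₀ρ)
  rcases (X.polyDim_le hρ).eq_or_lt with hdρ | hdρ
  · exact h.sum_mem_vectorSpan_of_facet hY hdim hτ hdτ hρ hdρ hx₀τ hx₀ρ hvY
  have hdρ' : polyDim ρ + 1 = X.dim := by omega
  have hV := h.vectorSpan_eq hX hτ hρ hx₀τ hx₀ρ hdτ hdρ'
  obtain ⟨vX, hvX, hbal⟩ := hXt ρ hρ hdρ'
  have hsum := add_mem (h.sum_sub_sum_mem_vectorSpan hX hY hdim hτ.1 hρ hx₀τ hx₀ρ hdτ hdρ' hV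
    hvY hvX) (hV ▸ hbal)
  rwa [← toReal_add, sub_add_cancel] at hsum

theorem isTropical_of_isTropical_refinement (hX : X.IsFan) (hY : Y.IsFan)
    (hdim : Y.dim = X.dim) (hYt : Y.IsTropical) : X.IsTropical := by
  refine X.isTropical_of_forall_starPolys hX fun μ hμ hdμ vX hvX => ?_
  obtain ⟨x₀, hx₀μ, hgen⟩ := exists_mem_intrinsicInterior_forall_finrank_le
    (X.convex_of_mem hμ.1) (X.nonempty_mem μ hμ.1) Y.finite
  obtain ⟨C, hC, hx₀C⟩ : x₀ ∈ Y.starSupport := h.2.1 ▸ ⟨μ, hμ, intrinsicInterior_subset hx₀μ⟩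
  obtain ⟨τ, hτ, hτC, hx₀τ⟩ := Y.exists_mem_intrinsicInterior hC.1 hx₀C
  have hτY := WComplex.mem_starPolys_of_subset hτ hC hτC
  have hdτ : polyDim τ + 1 = X.dim := by
    have : polyDim μ ≤ polyDim τ := hgen τ hτ (intrinsicInterior_subset hx₀τ)
    have := h.polyDim_ne_of_mem_intrinsicInterior hτY hμ.1 hdμ hx₀τ hx₀μ
    have := Y.polyDim_le hτ
    omega
  have hV := h.vectorSpan_eq hX hτY hμ.1 hx₀τ hx₀μ hdτ hdμ
  obtain ⟨vY, hvY, hbal⟩ := hYt τ hτ (hdim ▸ hdτ)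
  rw [← hV]
  have hsum := sub_mem hbal
    (h.sum_sub_sum_mem_vectorSpan hX hY hdim hτ hμ.1 hx₀τ hx₀μ hdτ hdμ hV hvY hvX)
  rwa [← toReal_sub, sub_sub_cancel] at hsum

end Refines

/-- If `(X, ω_X)` is a weighted fan of dimension `k` in `V` and
`(Y, ω_Y)` is a refinement of `(X, ω_X)`, then `X` is a tropical fan (satisfies the
balancing condition) if and only if `Y` is one. -/
theorem refinement_tropical_iff {N : ℕ} (X Y : WComplex N)
    (hX : X.IsFan) (hY : Y.IsFan) (hdim : Y.dim = X.dim) (h : Refines Y X) :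
    X.IsTropical ↔ Y.IsTropical :=
  ⟨h.isTropical_of_isTropical_coarsening hX hY hdim,
    h.isTropical_of_isTropical_refinement hX hY hdim⟩

end TropInt
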